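/- arXiv:2510.10884 — 6 statements merged into one kernel-verified Lean document; each statement's English description precedes it below -/
import Mathlib

section
/- Let Δ be a pure, collapsible d-dimensional simplicial complex with f_d facets and f_{d−1} ridges, and let K be a field. Then the f_d × f_{d−1} zero-one matrix M over K, with rows indexed by the facets of Δ and columns by the ridges of Δ, whose (F, σ) entry is 1 if σ ⊆ F and 0 otherwise (the log matrix of the facet ideal of the incidence complex Δ(d)), has rank f_d. In particular f_d ≤ f_{d−1}, and the facet ideal of Δ(d) has maximal analytic spread ℓ(F(Δ(d))) = f_d. -/
open MvPolynomial
open scoped Classical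

/-- `Δ` is a simplicial complex on vertex set `Fin n`: it contains the empty
face and is closed under taking subsets. -/
def IsComplex {n : ℕ} (Δ : Finset (Finset (Fin n))) : Prop :=
  ∅ ∈ Δ ∧ ∀ σ ∈ Δ, ∀ τ, τ ⊆ σ → τ ∈ Δ

/-- `Δ` has dimension `d`: every face has at most `d + 1` vertices and some
face has exactly `d + 1` vertices. -/
def HasDim {n : ℕ} (Δ : Finset (Finset (Fin n))) (d : ℕ) : Prop :=
  (∀ σ ∈ Δ, σ.card ≤ d + 1) ∧ ∃ σ ∈ Δ, σ.card = d + 1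

/-- `f_{k-1}(Δ)`: the number of faces of `Δ` with exactly `k` vertices. -/
noncomputable def faceCount {n : ℕ} (Δ : Finset (Finset (Fin n))) (k : ℕ) : ℕ :=
  (Δ.filter fun σ => σ.card = k).card

/-- The h-polynomial of a `d`-dimensional complex `Δ`, defined by
`∑_{i=0}^{d+1} f_{i-1}(Δ) (x-1)^{d+1-i} = ∑_{i=0}^{d+1} h_i x^{d+1-i}`;
obtained by reflecting the left-hand side in the window `[0, d+1]`. -/
noncomputable def hPoly {n : ℕ} (Δ : Finset (Finset (Fin n))) (d : ℕ) : Polynomial ℤ :=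
  Polynomial.reflect (d + 1)
    (∑ i ∈ Finset.range (d + 2), (faceCount Δ i : ℤ) • (Polynomial.X - 1) ^ (d + 1 - i))

/-- The Stanley–Reisner ideal of `Δ` in `K[x_1, …, x_n]`. -/
noncomputable def SRIdeal (K : Type) [Field K] {n : ℕ} (Δ : Finset (Finset (Fin n))) :
    Ideal (MvPolynomial (Fin n) K) :=
  Ideal.span {m | ∃ σ : Finset (Fin n), σ ∉ Δ ∧ m = ∏ i ∈ σ, X i}

/-- The ideal `(x_1^{a_1}, …, x_n^{a_n})`. -/
noncomputable def powersIdeal (K : Type) [Field K] (n : ℕ) (a : Fin n → ℕ) :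
    Ideal (MvPolynomial (Fin n) K) :=
  Ideal.span (Set.range fun i : Fin n => (X i : MvPolynomial (Fin n) K) ^ a i)

/-- `F` is a facet (maximal face) of `Δ`. -/
def IsFacet {n : ℕ} (Δ : Finset (Finset (Fin n))) (F : Finset (Fin n)) : Prop :=
  F ∈ Δ ∧ ∀ G ∈ Δ, F ⊆ G → F = G

/-- `Δ` is pure of dimension `d`: every facet has `d + 1` vertices. -/
def IsPure {n : ℕ} (Δ : Finset (Finset (Fin n))) (d : ℕ) : Prop :=
  ∀ F : Finset (Fin n), IsFacet Δ F → F.card = d + 1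

/-- The finset of facets of `Δ`. -/
noncomputable def facetsF {n : ℕ} (Δ : Finset (Finset (Fin n))) : Finset (Finset (Fin n)) :=
  Δ.filter fun F => ∀ G ∈ Δ, F ⊆ G → F = G

/-- The finset of ridges of a pure `d`-dimensional `Δ`: faces with `d` vertices. -/
noncomputable def ridgesF {n : ℕ} (Δ : Finset (Finset (Fin n))) (d : ℕ) :
    Finset (Finset (Fin n)) :=
  Δ.filter fun σ => σ.card = d

/-- The degree-`s` homogeneous component of `R/J`, as the image in the quotient
of the space of homogeneous polynomials of degree `s`. -/
noncomputable def quotComponent (K : Type) [Field K] {n : ℕ}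
    (J : Ideal (MvPolynomial (Fin n) K)) (s : ℕ) :
    Submodule K (MvPolynomial (Fin n) K ⧸ J) :=
  (MvPolynomial.homogeneousSubmodule (Fin n) K s).map (Ideal.Quotient.mkₐ K J).toLinearMap

/-- `dim_K (R/J)_s`. -/
noncomputable def quotDim (K : Type) [Field K] {n : ℕ}
    (J : Ideal (MvPolynomial (Fin n) K)) (s : ℕ) : ℕ :=
  Module.finrank K (quotComponent K J s)
/-- One elementary collapse: remove a free face `σ` (a face properly contained
in exactly one face `τ`) together with `τ`. -/
def CollapseStep {n : ℕ} (Δ Δ' : Finset (Finset (Fin n))) : Prop :=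
  ∃ σ τ : Finset (Fin n), σ ∈ Δ ∧ τ ∈ Δ ∧ σ ⊂ τ ∧
    (∀ η ∈ Δ, σ ⊂ η → η = τ) ∧ Δ' = Δ \ {σ, τ}

/-- `Δ` is collapsible: some sequence of elementary collapses reduces `Δ` to a
complex consisting of a single vertex. -/
def Collapsible {n : ℕ} (Δ : Finset (Finset (Fin n))) : Prop :=
  ∃ v : Fin n, Relation.ReflTransGen CollapseStep Δ {∅, {v}}

/-
Read a collapse sequence backwards: whenever a collapse removes a facet `τ` of `Δ`, its free face
`σ` is a ridge lying in no other facet still present. So every facet `F` gets a private ridge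
`r F`, and every other facet through `r F` is collapsed away before `F`. Ordering the rows of the
facet–ridge incidence matrix by collapse time and taking the column `r F` for the row `F` gives a
triangular square submatrix with ones on the diagonal, hence full row rank.
-/

open Finset

theorem Matrix.linearIndependent_row_of_pivots {m n α R : Type*} [Fintype m] [Ring R]
    [NoZeroDivisors R] [Preorder α] [WellFoundedLT α] (A : Matrix m n R) (p : m → n)
    (t : m → α) (hpivot : ∀ i, A i (p i) ≠ 0)
    (hlower : ∀ i j, j ≠ i → A j (p i) ≠ 0 → t j < t i) :
    LinearIndependent R A.row := by
  rw [Fintype.linearIndependent_iff]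
  intro g hg i
  induction i using (InvImage.wf t wellFounded_lt).induction with
  | _ i ih =>
    have hcol : ∑ j, g j * A j (p i) = 0 := by
      simpa [Finset.sum_apply, Matrix.row] using congrFun hg (p i)
    rw [Finset.sum_eq_single i (fun j _ hji => ?_) (by simp)] at hcol
    · exact (mul_eq_zero.mp hcol).resolve_right (hpivot i)
    · by_cases hA : A j (p i) = 0
      · rw [hA, mul_zero]
      · rw [ih j (hlower i j hji hA), zero_mul]

section

variable {n d : ℕ} {Δ Δ' : Finset (Finset (Fin n))} {σ τ : Finset (Fin n)}

def HasPrivateRidgeOrder (Δ : Finset (Finset (Fin n))) (d : ℕ) : Prop :=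
  ∃ (r : Finset (Fin n) → Finset (Fin n)) (t : Finset (Fin n) → ℕ), ∀ F ∈ Δ, F.card = d + 1 →
    r F ∈ Δ ∧ (r F).card = d ∧ r F ⊆ F ∧
      ∀ G ∈ Δ, G.card = d + 1 → r F ⊆ G → G ≠ F → t G < t F

theorem hasPrivateRidgeOrder_pair (v : Fin n) (d : ℕ) : HasPrivateRidgeOrder {∅, {v}} d := by
  have hsingleton : ∀ F ∈ ({∅, {v}} : Finset (Finset (Fin n))), F.card = d + 1 → F = {v} := by
    intro F hF hcard
    rcases mem_insert.mp hF with rfl | hF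
    · simp at hcard
    · exact mem_singleton.mp hF
  refine ⟨fun _ => ∅, fun _ => 0, fun F hF hcard => ⟨by simp, ?_, empty_subset F, ?_⟩⟩
  · rw [hsingleton F hF hcard, card_singleton] at hcard
    simp [← Nat.succ_inj.mp hcard]
  · intro G hG hGcard _ hGF
    exact absurd ((hsingleton G hG hGcard).trans (hsingleton F hF hcard).symm) hGF

theorem card_eq_succ_of_free (hΔ : IsLowerSet (Δ : Set (Finset (Fin n)))) (hτ : τ ∈ Δ)
    (hστ : σ ⊂ τ) (hfree : ∀ η ∈ Δ, σ ⊂ η → η = τ) : τ.card = σ.card + 1 := by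
  obtain ⟨x, hxτ, hxσ⟩ := exists_of_ssubset hστ
  have hinsert : insert x σ = τ :=
    hfree _ (hΔ (insert_subset hxτ hστ.subset) hτ) (ssubset_insert hxσ)
  rw [← hinsert, card_insert_of_notMem hxσ]

theorem CollapseStep.isLowerSet (hstep : CollapseStep Δ Δ')
    (hΔ : IsLowerSet (Δ : Set (Finset (Fin n)))) : IsLowerSet (Δ' : Set (Finset (Fin n))) := by
  obtain ⟨σ, τ, -, -, hστ, hfree, rfl⟩ := hstep
  intro ρ η hηρ hρ
  simp only [coe_sdiff, Set.mem_sdiff, mem_coe, coe_insert, coe_singleton, Set.mem_insert_iff,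
    Set.mem_singleton_iff, not_or] at hρ ⊢
  obtain ⟨hρΔ, hρσ, hρτ⟩ := hρ
  -- removing `η` would mean `σ ⊂ ρ`, forcing `ρ = τ`
  have hσρ : η = σ ∨ η = τ → σ ⊂ ρ := by
    rintro (rfl | rfl)
    · exact lt_of_le_of_ne hηρ (Ne.symm hρσ)
    · exact lt_of_lt_of_le hστ hηρ
  exact ⟨hΔ hηρ hρΔ, fun h => hρτ (hfree ρ hρΔ (hσρ (.inl h))),
    fun h => hρτ (hfree ρ hρΔ (hσρ (.inr h)))⟩

theorem CollapseStep.subset (hstep : CollapseStep Δ Δ') : Δ' ⊆ Δ := by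
  obtain ⟨σ, τ, -, -, -, -, rfl⟩ := hstep
  exact sdiff_subset

theorem HasPrivateRidgeOrder.of_collapseStep (hΔ : IsLowerSet (Δ : Set (Finset (Fin n))))
    (hbound : ∀ ρ ∈ Δ, ρ.card ≤ d + 1) (hstep : CollapseStep Δ Δ')
    (h : HasPrivateRidgeOrder Δ' d) : HasPrivateRidgeOrder Δ d := by
  obtain ⟨σ, τ, hσ, hτ, hστ, hfree, rfl⟩ := hstep
  obtain ⟨r, t, hrt⟩ := h
  have hcard := card_eq_succ_of_free hΔ hτ hστ hfree
  have hmem : ∀ F ∈ Δ, F.card = d + 1 → F ≠ τ → F ∈ Δ \ {σ, τ} := by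
    intro F hF hFcard hFτ
    have hFσ : F ≠ σ := by rintro rfl; have := hbound τ hτ; omega
    simp [hF, hFσ, hFτ]
  -- `τ` is collapsed first, with private ridge `σ`; all other times are shifted by one
  refine ⟨fun F => if F = τ then σ else r F, fun F => if F = τ then 0 else t F + 1, ?_⟩
  intro F hF hFcard
  by_cases hFτ : F = τ
  · subst hFτ
    simp only [if_true]
    refine ⟨hσ, by omega, hστ.subset, fun G hG hGcard hσG hGF => ?_⟩
    have hσG : σ ⊂ G := lt_of_le_of_ne hσG (by rintro rfl; omega)
    exact absurd (hfree G hG hσG) hGF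
  · obtain ⟨hrF, hrcard, hrsub, hlater⟩ := hrt F (hmem F hF hFcard hFτ) hFcard
    simp only [hFτ, if_false]
    refine ⟨(mem_sdiff.mp hrF).1, hrcard, hrsub, fun G hG hGcard hrG hGF => ?_⟩
    by_cases hGτ : G = τ
    · simp [hGτ]
    · simpa [hGτ] using hlater G (hmem G hG hGcard hGτ) hGcard hrG hGF

theorem Collapsible.hasPrivateRidgeOrder (hcol : Collapsible Δ)
    (hΔ : IsLowerSet (Δ : Set (Finset (Fin n)))) (hbound : ∀ ρ ∈ Δ, ρ.card ≤ d + 1) :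
    HasPrivateRidgeOrder Δ d := by
  obtain ⟨v, hchain⟩ := hcol
  induction hchain using Relation.ReflTransGen.head_induction_on with
  | refl => exact hasPrivateRidgeOrder_pair v d
  | head hstep _ ih =>
    exact .of_collapseStep hΔ hbound hstep
      (ih (hstep.isLowerSet hΔ) fun ρ hρ => hbound ρ (hstep.subset hρ))

theorem mem_facetsF_iff_of_isPure (hpure : IsPure Δ d) (hbound : ∀ ρ ∈ Δ, ρ.card ≤ d + 1)
    {F : Finset (Fin n)} : F ∈ facetsF Δ ↔ F ∈ Δ ∧ F.card = d + 1 := by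
  rw [facetsF, mem_filter]
  refine ⟨fun hF => ⟨hF.1, hpure F hF⟩, fun ⟨hF, hcard⟩ => ⟨hF, fun G hG hFG => ?_⟩⟩
  exact eq_of_subset_of_card_le hFG (hcard ▸ hbound G hG)

def facetRidgeMatrix (K : Type*) [Zero K] [One K] (Δ : Finset (Finset (Fin n))) (d : ℕ) :
    Matrix {F // F ∈ facetsF Δ} {σ // σ ∈ ridgesF Δ d} K :=
  fun F σ => if σ.1 ⊆ F.1 then 1 else 0

theorem HasPrivateRidgeOrder.rank_facetRidgeMatrix (K : Type*) [Field K]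
    (h : HasPrivateRidgeOrder Δ d) (hpure : IsPure Δ d) (hbound : ∀ ρ ∈ Δ, ρ.card ≤ d + 1) :
    (facetRidgeMatrix K Δ d).rank = (facetsF Δ).card := by
  obtain ⟨r, t, hrt⟩ := h
  have hfacet (F : {F // F ∈ facetsF Δ}) := (mem_facetsF_iff_of_isPure hpure hbound).mp F.2
  have hprivate (F : {F // F ∈ facetsF Δ}) := hrt F.1 (hfacet F).1 (hfacet F).2
  let p (F : {F // F ∈ facetsF Δ}) : {σ // σ ∈ ridgesF Δ d} :=
    ⟨r F.1, mem_filter.mpr ⟨(hprivate F).1, (hprivate F).2.1⟩⟩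
  have hpivot (F) : facetRidgeMatrix K Δ d F (p F) ≠ 0 := by
    simp [facetRidgeMatrix, p, (hprivate F).2.2.1]
  have hlower (F G) (hGF : G ≠ F) (hA : facetRidgeMatrix K Δ d G (p F) ≠ 0) : t G.1 < t F.1 := by
    have hsub : r F.1 ⊆ G.1 := by
      by_contra hnot
      simp [facetRidgeMatrix, p, hnot] at hA
    exact (hprivate F).2.2.2 G.1 (hfacet G).1 (hfacet G).2 hsub (Subtype.coe_ne_coe.mpr hGF)
  rw [(Matrix.linearIndependent_row_of_pivots _ p (fun F => t F.1) hpivot hlower).rank_matrix,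
    Fintype.card_coe]

end

theorem collapsible_logMatrix_full_rank_general (K : Type) [Field K]
    {n d : ℕ} (Δ : Finset (Finset (Fin n)))
    (hcomplex : IsComplex Δ) (hdim : HasDim Δ d)
    (hpure : IsPure Δ d) (hcol : Collapsible Δ) :
    (Matrix.rank (fun (F : {F // F ∈ facetsF Δ}) (σ : {σ // σ ∈ ridgesF Δ d}) =>
        if σ.1 ⊆ F.1 then (1 : K) else 0) = (facetsF Δ).card) ∧
    (facetsF Δ).card ≤ (ridgesF Δ d).card := by
  have hΔ : IsLowerSet (Δ : Set (Finset (Fin n))) := fun _ _ hsub hmem =>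
    hcomplex.2 _ hmem _ hsub
  have hrank : (facetRidgeMatrix K Δ d).rank = (facetsF Δ).card :=
    (hcol.hasPrivateRidgeOrder hΔ hdim.1).rank_facetRidgeMatrix K hpure hdim.1
  refine ⟨hrank, ?_⟩
  calc (facetsF Δ).card = (facetRidgeMatrix K Δ d).rank := hrank.symm
    _ ≤ Fintype.card {σ // σ ∈ ridgesF Δ d} := Matrix.rank_le_card_width _
    _ = (ridgesF Δ d).card := Fintype.card_coe _

/-- **Collapsibility gives maximal analytic spread for `F(Δ(d))`.**
For a pure collapsible `d`-dimensional complex `Δ`, the facet–ridge incidence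
matrix (the log matrix of the facet ideal of the incidence complex `Δ(d)`,
with one row for each facet of `Δ` and one column for each ridge) has rank
equal to the number `f_d` of facets; in particular `f_d ≤ f_{d-1}`, and since
the analytic spread of an equigenerated monomial ideal is the rank of its log
matrix, `ℓ(F(Δ(d))) = f_d` is maximal. -/
theorem collapsible_logMatrix_full_rank (K : Type) [Field K]
    {n d : ℕ} (Δ : Finset (Finset (Fin n)))
    (hcomplex : IsComplex Δ) (hd : 1 ≤ d) (hdim : HasDim Δ d)
    (hpure : IsPure Δ d) (hcol : Collapsible Δ) :
    (Matrix.rank (fun (F : {F // F ∈ facetsF Δ}) (σ : {σ // σ ∈ ridgesF Δ d}) =>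
        if σ.1 ⊆ F.1 then (1 : K) else 0) = (facetsF Δ).card) ∧
    (facetsF Δ).card ≤ (ridgesF Δ d).card :=
  collapsible_logMatrix_full_rank_general K Δ hcomplex hdim hpure hcol
end

section
/- Let Δ be a pure, collapsible d-dimensional simplicial complex, let r > 0 be an integer, and let K be a field. Then the log matrix over K of the r-fold half-hollow edgewise subdivision hesd(Δ(d), r) of the incidence complex Δ(d) has rank equal to its number of rows, i.e., equal to the number of facets of hesd(Δ(d), r). In particular, the facet ideal F(hesd(Δ(d), r)) has maximal analytic spread. -/
open MvPolynomial
open scoped Classical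

/-- The vertex set `Ω^r` of the `r`-fold half-hollow edgewise subdivision of
the incidence complex `Δ(d)`: vectors indexed by the ridges of `Δ` with
nonnegative entries summing to `r`. -/
abbrev HesdVert {n : ℕ} (Δ : Finset (Finset (Fin n))) (d r : ℕ) : Type :=
  {b : {σ // σ ∈ ridgesF Δ d} → Fin (r + 1) // ∑ σ, (b σ : ℕ) = r}

/-- The facets of the `r`-fold half-hollow edgewise subdivision of `Δ(d)`:
a facet is encoded by a facet `F` of `Δ` together with a vector `a` on the
ridges, supported on the ridges of `F`, with entries summing to `r - 1`;
the corresponding facet is `{a + e_σ : σ a ridge of F}`. -/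
abbrev HesdFacet {n : ℕ} (Δ : Finset (Finset (Fin n))) (d r : ℕ) : Type :=
  {p : {F // F ∈ facetsF Δ} × ({σ // σ ∈ ridgesF Δ d} → Fin (r + 1)) //
    (∑ σ, (p.2 σ : ℕ)) = r - 1 ∧
      ∀ σ : {σ // σ ∈ ridgesF Δ d}, p.2 σ ≠ 0 → σ.1 ⊆ p.1.1}

/-- The vertex `b` belongs to the facet of `hesd(Δ(d), r)` encoded by `p`,
i.e. `b = a + e_σ` for some ridge `σ` of the facet. -/
def hesdMem {n : ℕ} {Δ : Finset (Finset (Fin n))} {d r : ℕ}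
    (p : HesdFacet Δ d r) (b : HesdVert Δ d r) : Prop :=
  ∃ σ : {σ // σ ∈ ridgesF Δ d}, σ.1 ⊆ p.1.1.1 ∧
    ∀ τ : {σ // σ ∈ ridgesF Δ d},
      (b.1 τ : ℕ) = (p.1.2 τ : ℕ) + if τ = σ then 1 else 0
/-! ### Auxiliary lemmas for the main theorem -/

/-- No collapsing sequence starts from the empty collection of faces. -/
lemma collapse_not_from_empty {n : ℕ} (v : Fin n) :
    ¬ Relation.ReflTransGen CollapseStep (∅ : Finset (Finset (Fin n))) {∅, {v}} := by
  intro h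
  rcases Relation.ReflTransGen.cases_head h with h | ⟨c, hstep, _⟩
  · have h0 : (∅ : Finset (Fin n)) ∈ ({∅, {v}} : Finset (Finset (Fin n))) := by simp
    rw [← h] at h0
    simp at h0
  · obtain ⟨σ, τ, hσ, _⟩ := hstep
    simp at hσ

/-- From a collapsing sequence one obtains, for every `(d+1)`-face `F`, a
"free ridge" `fr F ⊆ F` of cardinality `d` together with ranks such that any
other `(d+1)`-face containing `fr F` has strictly smaller rank. -/
lemma good_of_collapse {n d : ℕ} (hd : 1 ≤ d) (v : Fin n)
    (Γ : Finset (Finset (Fin n)))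
    (hcol : Relation.ReflTransGen CollapseStep Γ {∅, {v}}) :
    IsComplex Γ → (∀ F ∈ Γ, F.card ≤ d + 1) →
    ∃ (rk : Finset (Fin n) → ℕ) (fr : Finset (Fin n) → Finset (Fin n)),
      ∀ F ∈ Γ, F.card = d + 1 →
        fr F ⊆ F ∧ (fr F).card = d ∧
        ∀ F' ∈ Γ, F'.card = d + 1 → fr F ⊆ F' → F' = F ∨ rk F' < rk F := by
  induction hcol using Relation.ReflTransGen.head_induction_on with
  | refl =>
      intro _ _
      refine ⟨fun _ => 0, fun _ => ∅, ?_⟩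
      intro F hF hcard
      exfalso
      have : F.card ≤ 1 := by
        rcases Finset.mem_insert.mp hF with h | h
        · simp [h]
        · rw [Finset.mem_singleton] at h; simp [h]
      omega
  | @head Γ₀ Γc hstep hrest ih =>
      intro hcpx hbd
      obtain ⟨σ, τ, hσΓ, hτΓ, hst, hfree, hΓc⟩ := hstep
      -- the free face is nonempty
      have hσne : σ ≠ ∅ := by
        intro h0
        subst h0
        have hsub : Γc = ∅ := by
          rw [hΓc]
          apply Finset.eq_empty_of_forall_notMem
          intro η hη
          rw [Finset.mem_sdiff] at hη
          obtain ⟨hηΓ, hηn⟩ := hη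
          simp only [Finset.mem_insert, Finset.mem_singleton] at hηn
          push_neg at hηn
          rcases eq_or_ne η ∅ with h | h
          · exact (Finset.nonempty_iff_ne_empty.mp hηn.1) h
          · refine hηn.2 (hfree η hηΓ ?_)
            exact Finset.empty_ssubset.mpr (Finset.nonempty_iff_ne_empty.mpr h)
        rw [hsub] at hrest
        exact collapse_not_from_empty v hrest
      have hτne : τ ≠ ∅ := by
        intro h0
        have := hst.subset
        rw [h0, Finset.subset_empty] at this
        exact hσne this
      -- `Γc` is again a complex
      have hτnotc : τ ∉ Γc := by rw [hΓc]; simp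
      have hσnotc : σ ∉ Γc := by rw [hΓc]; simp
      have hcpxc : IsComplex Γc := by
        constructor
        · rw [hΓc, Finset.mem_sdiff]
          refine ⟨hcpx.1, ?_⟩
          simp only [Finset.mem_insert, Finset.mem_singleton]
          push_neg
          exact ⟨fun h => hσne h.symm, fun h => hτne h.symm⟩
        · intro ρ hρ η hη
          have hρ' := hρ
          rw [hΓc, Finset.mem_sdiff] at hρ'
          obtain ⟨hρΓ, hρn⟩ := hρ'
          simp only [Finset.mem_insert, Finset.mem_singleton] at hρn
          push_neg at hρn
          have hηΓ : η ∈ Γ₀ := hcpx.2 ρ hρΓ η hη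
          rw [hΓc, Finset.mem_sdiff]
          refine ⟨hηΓ, ?_⟩
          simp only [Finset.mem_insert, Finset.mem_singleton]
          push_neg
          constructor
          · intro h0
            subst h0
            have : η ⊂ ρ := ⟨hη, fun hρη => hρn.1 (Finset.Subset.antisymm hρη hη)⟩
            exact hρn.2 (hfree ρ hρΓ this)
          · intro h0
            subst h0
            have hσρ : σ ⊂ ρ := lt_of_lt_of_le hst hη
            exact hρn.2 (hfree ρ hρΓ hσρ)
      have hbdc : ∀ F ∈ Γc, F.card ≤ d + 1 := by
        intro F hF
        rw [hΓc, Finset.mem_sdiff] at hF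
        exact hbd F hF.1
      obtain ⟨rk, fr, hgood⟩ := ih hcpxc hbdc
      have hσle : σ.card ≤ d := by
        have h1 : σ.card < τ.card := Finset.card_lt_card hst
        have h2 : τ.card ≤ d + 1 := hbd τ hτΓ
        omega
      by_cases hτd : τ.card = d + 1
      · -- the removed maximal face has full size: its free face is a ridge
        have hσd : σ.card = d := by
          by_contra hne
          have hlt : σ.card < d := lt_of_le_of_ne hσle hne
          obtain ⟨x, hxτ, hxσ⟩ := Finset.exists_of_ssubset hst
          have h1 : σ ⊂ insert x σ := Finset.ssubset_insert hxσ
          have h2 : insert x σ ⊆ τ := Finset.insert_subset hxτ hst.subset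
          have hσ' : insert x σ ∈ Γ₀ := hcpx.2 τ hτΓ _ h2
          have heqτ : insert x σ = τ := hfree _ hσ' h1
          have : (insert x σ).card ≤ σ.card + 1 := Finset.card_insert_le _ _
          rw [heqτ, hτd] at this
          omega
        refine ⟨fun F => if F = τ then 0 else rk F + 1,
                fun F => if F = τ then σ else fr F, ?_⟩
        intro F hF hFd
        by_cases hFτ : F = τ
        · subst hFτ
          simp only [if_pos rfl]
          refine ⟨hst.subset, hσd, ?_⟩
          intro F' hF' hF'd hσF'
          left
          have hne : σ ≠ F' := by intro h; rw [h] at hσd; omega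
          exact hfree F' hF' ⟨hσF', fun h => hne (Finset.Subset.antisymm hσF' h)⟩
        · have hFσ : F ≠ σ := by intro h; rw [h] at hFd; omega
          have hFc : F ∈ Γc := by
            rw [hΓc, Finset.mem_sdiff]
            exact ⟨hF, by simp [hFτ, hFσ]⟩
          obtain ⟨h1, h2, h3⟩ := hgood F hFc hFd
          simp only [if_neg hFτ]
          refine ⟨h1, h2, ?_⟩
          intro F' hF' hF'd hsub
          by_cases hF'τ : F' = τ
          · right
            simp only [if_pos hF'τ]
            omega
          · have hF'σ : F' ≠ σ := by intro h; rw [h] at hF'd; omega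
            have hF'c : F' ∈ Γc := by
              rw [hΓc, Finset.mem_sdiff]
              exact ⟨hF', by simp [hF'τ, hF'σ]⟩
            rcases h3 F' hF'c hF'd hsub with h | h
            · left; exact h
            · right; simp only [if_neg hF'τ]; omega
      · -- the removed pair has no `(d+1)`-face
        refine ⟨rk, fr, ?_⟩
        intro F hF hFd
        have hFτ : F ≠ τ := by intro h; rw [h] at hFd; exact hτd hFd
        have hFσ : F ≠ σ := by intro h; rw [h] at hFd; omega
        have hFc : F ∈ Γc := by
          rw [hΓc, Finset.mem_sdiff]
          exact ⟨hF, by simp [hFτ, hFσ]⟩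
        obtain ⟨h1, h2, h3⟩ := hgood F hFc hFd
        refine ⟨h1, h2, ?_⟩
        intro F' hF' hF'd hsub
        have hF'τ : F' ≠ τ := by intro h; rw [h] at hF'd; exact hτd hF'd
        have hF'σ : F' ≠ σ := by intro h; rw [h] at hF'd; omega
        have hF'c : F' ∈ Γc := by
          rw [hΓc, Finset.mem_sdiff]
          exact ⟨hF', by simp [hF'τ, hF'σ]⟩
        exact h3 F' hF'c hF'd hsub

/-- The rows of the log matrix of `hesd(Δ(d), r)` are linearly independent:
the only vector in the kernel of the transpose is zero. -/
lemma hesd_kernel_zero (K : Type) [Field K] {n d r : ℕ}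
    (Δ : Finset (Finset (Fin n)))
    (hcomplex : IsComplex Δ) (hd : 1 ≤ d) (hdim : HasDim Δ d)
    (hpure : IsPure Δ d) (hcol : Collapsible Δ) (hr : 0 < r)
    (c : HesdFacet Δ d r → K)
    (hc : ∀ b : HesdVert Δ d r,
      ∑ p : HesdFacet Δ d r, (if hesdMem p b then c p else 0) = 0) :
    c = 0 := by
  obtain ⟨v, hv⟩ := hcol
  obtain ⟨rk, fr, hgood⟩ := good_of_collapse hd v Δ hv hcomplex hdim.1
  -- facets are exactly the `(d+1)`-faces
  have hfacetmem : ∀ F : {F // F ∈ facetsF Δ}, F.1 ∈ Δ ∧ F.1.card = d + 1 := by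
    intro F
    have h := F.2
    unfold facetsF at h
    rw [Finset.mem_filter] at h
    exact ⟨h.1, hpure F.1 ⟨h.1, h.2⟩⟩
  have hgood' : ∀ F : {F // F ∈ facetsF Δ},
      fr F.1 ⊆ F.1 ∧ (fr F.1).card = d ∧
      ∀ F' : {F // F ∈ facetsF Δ}, fr F.1 ⊆ F'.1 → F' = F ∨ rk F'.1 < rk F.1 := by
    intro F
    obtain ⟨h1, h2, h3⟩ := hgood F.1 (hfacetmem F).1 (hfacetmem F).2
    refine ⟨h1, h2, fun F' hsub => ?_⟩
    rcases h3 F'.1 (hfacetmem F').1 (hfacetmem F').2 hsub with h | h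
    · left; exact Subtype.ext h
    · right; exact h
  have hfrridge : ∀ F : {F // F ∈ facetsF Δ}, fr F.1 ∈ ridgesF Δ d := by
    intro F
    unfold ridgesF
    rw [Finset.mem_filter]
    exact ⟨hcomplex.2 F.1 (hfacetmem F).1 _ (hgood' F).1, (hgood' F).2.1⟩
  -- every entry of the `a`-vector of a facet of the subdivision is `≤ r - 1`
  have hbound : ∀ (p : HesdFacet Δ d r) (τ : {σ // σ ∈ ridgesF Δ d}),
      (p.1.2 τ : ℕ) ≤ r - 1 := by
    intro p τ
    calc (p.1.2 τ : ℕ) ≤ ∑ τ', (p.1.2 τ' : ℕ) :=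
          Finset.single_le_sum (f := fun τ' => ((p.1.2 τ' : ℕ)))
            (fun _ _ => Nat.zero_le _) (Finset.mem_univ τ)
      _ = r - 1 := p.2.1
  -- the key double induction
  have key : ∀ k m : ℕ, ∀ p : HesdFacet Δ d r,
      rk p.1.1.1 < k →
      r - 1 - (p.1.2 ⟨fr p.1.1.1, hfrridge p.1.1⟩ : ℕ) < m → c p = 0 := by
    intro k
    induction k with
    | zero => intro m p h; omega
    | succ k ihk =>
      intro m
      induction m with
      | zero => intro p _ h; omega
      | succ m ihm =>
        intro p hk hm
        set σ : {σ // σ ∈ ridgesF Δ d} := ⟨fr p.1.1.1, hfrridge p.1.1⟩ with hσdef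
        -- the auxiliary vertex `b = a + e_σ`
        have hble : ∀ τ : {σ // σ ∈ ridgesF Δ d},
            (p.1.2 τ : ℕ) + (if τ = σ then 1 else 0) < r + 1 := by
          intro τ
          have hb := hbound p τ
          split <;> omega
        have hbsum : ∑ τ, (((⟨(p.1.2 τ : ℕ) + (if τ = σ then 1 else 0), hble τ⟩ :
            Fin (r + 1)) : ℕ)) = r := by
          simp only
          rw [Finset.sum_add_distrib, p.2.1]
          rw [Finset.sum_ite_eq' Finset.univ σ (fun _ => 1)]
          simp only [Finset.mem_univ, if_pos]
          omega
        set b : HesdVert Δ d r :=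
          ⟨fun τ => ⟨(p.1.2 τ : ℕ) + (if τ = σ then 1 else 0), hble τ⟩, hbsum⟩ with hbdef
        have hmemp : hesdMem p b := ⟨σ, (hgood' p.1.1).1, fun τ => rfl⟩
        -- all other facets of the subdivision contribute zero at `b`
        have hside : ∀ p' ∈ (Finset.univ : Finset (HesdFacet Δ d r)), p' ≠ p →
            (if hesdMem p' b then c p' else 0) = 0 := by
          intro p' _ hne
          by_cases hmem' : hesdMem p' b
          · rw [if_pos hmem']
            obtain ⟨σ', hσ'sub, heq⟩ := hmem'
            by_cases hσσ : σ' = σ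
            · subst hσσ
              have haa : p'.1.2 = p.1.2 := by
                funext τ
                have h1 := heq τ
                have h2 : (b.1 τ : ℕ) = (p.1.2 τ : ℕ) + (if τ = σ then 1 else 0) := rfl
                exact Fin.ext (by omega)
              rcases (hgood' p.1.1).2.2 p'.1.1 hσ'sub with hFF | hlt
              · exfalso
                exact hne (Subtype.ext (Prod.ext hFF haa))
              · exact ihk r p' (by omega) (by omega)
            · have h1 := heq σ
              have h2 : (b.1 σ : ℕ) = (p.1.2 σ : ℕ) + (if σ = σ then 1 else 0) := rfl
              rw [if_pos rfl] at h2
              rw [if_neg (fun h => hσσ h.symm)] at h1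
              have ha' : (p'.1.2 σ : ℕ) = (p.1.2 σ : ℕ) + 1 := by omega
              have hσ0 : p'.1.2 σ ≠ 0 := by
                intro h0
                have : (p'.1.2 σ : ℕ) = 0 := by rw [h0]; rfl
                omega
              have hσsub : σ.1 ⊆ p'.1.1.1 := p'.2.2 σ hσ0
              rcases (hgood' p.1.1).2.2 p'.1.1 hσsub with hFF | hlt
              · -- same facet of `Δ`: inner induction
                apply ihm p' (by rw [hFF]; exact hk)
                have hfreq : (⟨fr p'.1.1.1, hfrridge p'.1.1⟩ :
                    {σ // σ ∈ ridgesF Δ d}) = σ := by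
                  rw [hσdef]
                  exact Subtype.ext (by rw [hFF])
                rw [hfreq]
                have hb' := hbound p' σ
                omega
              · exact ihk r p' (by omega) (by omega)
          · rw [if_neg hmem']
        have hsum0 := hc b
        rw [Finset.sum_eq_single_of_mem p (Finset.mem_univ p) hside] at hsum0
        rw [if_pos hmemp] at hsum0
        exact hsum0
  funext p
  have := key (rk p.1.1.1 + 1) r p (Nat.lt_succ_self _) (by omega)
  simpa using this

/-- **Collapsibility and half-hollow edgewise subdivisions
(Proposition `t:collapsiblespread`).**
If `Δ` is a pure collapsible `d`-dimensional complex and `r > 0`, then the log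
matrix of the facet ideal of the `r`-fold half-hollow edgewise subdivision
`hesd(Δ(d), r)` of the incidence complex `Δ(d)` has rank equal to its number
of rows (the number of facets of `hesd(Δ(d), r)`); in particular
`F(hesd(Δ(d), r))` has maximal analytic spread. -/
theorem collapsible_hesd_logMatrix_full_rank (K : Type) [Field K]
    {n d r : ℕ} (Δ : Finset (Finset (Fin n)))
    (hcomplex : IsComplex Δ) (hd : 1 ≤ d) (hdim : HasDim Δ d)
    (hpure : IsPure Δ d) (hcol : Collapsible Δ) (hr : 0 < r) :
    Matrix.rank (fun (p : HesdFacet Δ d r) (b : HesdVert Δ d r) =>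
        if hesdMem p b then (1 : K) else 0) =
      Fintype.card (HesdFacet Δ d r) := by
  set M : Matrix (HesdFacet Δ d r) (HesdVert Δ d r) K :=
    fun p b => if hesdMem p b then (1 : K) else 0 with hMdef
  rw [← Matrix.rank_transpose]
  rw [Matrix.rank]
  have hinj : Function.Injective (Matrix.mulVecLin M.transpose) := by
    rw [← LinearMap.ker_eq_bot, LinearMap.ker_eq_bot']
    intro c hc0
    apply hesd_kernel_zero K Δ hcomplex hd hdim hpure hcol hr c
    intro b
    have hb := congrFun hc0 b
    simp only [Matrix.mulVecLin_apply, Matrix.mulVec, dotProduct,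
      Matrix.transpose_apply, hMdef, ite_mul, one_mul, zero_mul,
      Pi.zero_apply] at hb
    simpa [Matrix.transpose, Matrix.of_apply, ite_mul] using hb
  rw [LinearMap.finrank_range_of_inj hinj]
  exact Module.finrank_fintype_fun_eq_card K
end

section
/- Let K be a field of characteristic zero, let a > 0 be an integer, and let I ⊆ R = K[x_1,…,x_n] be a homogeneous ideal such that R/I is a finite-dimensional K-vector space whose socle Soc(R/I) = { f ∈ R/I : x_i·f = 0 for all i } is one-dimensional over K (i.e., R/I is artinian Gorenstein). If x_i^a ∈ I for every i and L = x_1 + ⋯ + x_n ∈ I, then the socle degree of R/I is at most n(a−1)/2; that is, (R/I)_t = 0 for every integer t > n(a−1)/2. -/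
open MvPolynomial
open scoped Classical

/-- The socle of `R/I`: the elements annihilated by every variable. -/
noncomputable def socle (K : Type) [Field K] {n : ℕ}
    (I : Ideal (MvPolynomial (Fin n) K)) :
    Submodule K (MvPolynomial (Fin n) K ⧸ I) where
  carrier := {f | ∀ i : Fin n, Ideal.Quotient.mk I (X i) * f = 0}
  add_mem' := by
    intro f g hf hg i
    rw [mul_add, hf i, hg i, add_zero]
  zero_mem' := by
    intro i
    rw [mul_zero]
  smul_mem' := by
    intro c f hf i
    rw [mul_smul_comm, hf i, smul_zero]

namespace GorAux

variable {K : Type} [Field K]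

/-- coefficient functions indexed by exponent vectors -/
abbrev M (K : Type) [Field K] (n : ℕ) : Type := (Fin n → ℕ) → K

/-- lowering operator (dual to multiplication by `x₁+⋯+xₙ`) -/
def low {n : ℕ} (c : M K n) : M K n :=
  fun γ => ∑ i, c (Function.update γ i (γ i + 1))

/-- raising operator (sl₂ partner of `low` on the box) -/
def rai {n : ℕ} (a : ℕ) (c : M K n) : M K n :=
  fun γ => ∑ i, ((γ i * (a - γ i) : ℕ) : K) * c (Function.update γ i (γ i - 1))

def Boxed {n : ℕ} (a : ℕ) (c : M K n) : Prop :=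
  ∀ γ : Fin n → ℕ, ∀ i, a ≤ γ i → c γ = 0

def Homog {n : ℕ} (d : ℕ) (c : M K n) : Prop :=
  ∀ γ : Fin n → ℕ, c γ ≠ 0 → ∑ i, γ i = d

lemma low_zero {n : ℕ} : low (0 : M K n) = 0 := by
  funext γ; simp [low]

lemma rai_zero {n a : ℕ} : rai a (0 : M K n) = 0 := by
  funext γ; simp [rai]

lemma rai_smul {n a : ℕ} (z : K) (c : M K n) : rai a (z • c) = z • rai a c := by
  funext γ
  simp [rai, Pi.smul_apply, smul_eq_mul, Finset.mul_sum, mul_left_comm]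

lemma boxed_rai {n a : ℕ} {c : M K n} (hc : Boxed a c) : Boxed a (rai a c) := by
  intro γ j hj
  simp only [rai]
  apply Finset.sum_eq_zero
  intro i _
  by_cases hij : i = j
  · subst hij
    have : a - γ i = 0 := Nat.sub_eq_zero_of_le hj
    simp [this]
  · have : c (Function.update γ i (γ i - 1)) = 0 := by
      apply hc _ j
      rw [Function.update_of_ne (fun h => hij h.symm)]
      exact hj
    simp [this]

lemma homog_rai {n a d : ℕ} {c : M K n} (hc : Homog d c) : Homog (d + 1) (rai a c) := by
  intro γ hγ
  simp only [rai] at hγ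
  obtain ⟨i, -, hi⟩ := Finset.exists_ne_zero_of_sum_ne_zero hγ
  have hpos : 0 < γ i := by
    by_contra h
    push_neg at h
    interval_cases hh : γ i <;> simp_all
  have hco : c (Function.update γ i (γ i - 1)) ≠ 0 := fun h => by simp [h] at hi
  have hs := hc _ hco
  have h1 : ∑ k, Function.update γ i (γ i - 1) k
      = (γ i - 1) + ∑ k ∈ Finset.univ.erase i, γ k := by
    rw [Finset.sum_update_of_mem (Finset.mem_univ i)]
    congr 1
    exact Finset.sum_congr (by simp [Finset.sdiff_singleton_eq_erase]) (fun x hx => rfl)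
  have h2 : ∑ k, γ k = γ i + ∑ k ∈ Finset.univ.erase i, γ k :=
    (Finset.add_sum_erase _ _ (Finset.mem_univ i)).symm
  omega

lemma sum_update_succ {n : ℕ} (γ : Fin n → ℕ) (i : Fin n) :
    (∑ k, Function.update γ i (γ i + 1) k) = (∑ k, γ k) + 1 := by
  have h1 : ∑ k, Function.update γ i (γ i + 1) k
      = (γ i + 1) + ∑ k ∈ Finset.univ.erase i, γ k := by
    rw [Finset.sum_update_of_mem (Finset.mem_univ i)]
    congr 1
    exact Finset.sum_congr (by simp [Finset.sdiff_singleton_eq_erase]) (fun x hx => rfl)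
  have h2 : ∑ k, γ k = γ i + ∑ k ∈ Finset.univ.erase i, γ k :=
    (Finset.add_sum_erase _ _ (Finset.mem_univ i)).symm
  omega

lemma vanish {n a d : ℕ} {c : M K n} (hb : Boxed a c) (hh : Homog d c)
    (hd : n * (a - 1) < d) : c = 0 := by
  funext γ
  by_contra hγ
  have hbox : ∀ i, γ i ≤ a - 1 := by
    intro i
    by_contra h
    push_neg at h
    exact hγ (hb γ i (by omega))
  have h1 : ∑ i, γ i ≤ ∑ _i : Fin n, (a - 1) := Finset.sum_le_sum (fun i _ => hbox i)
  simp only [Finset.sum_const, Finset.card_univ, Fintype.card_fin, smul_eq_mul] at h1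
  have := hh γ hγ
  omega

lemma comm {n a d : ℕ} (c : M K n) (hb : Boxed a c) (hh : Homog d c) :
    low (rai a c) = rai a (low c)
      + ((((n : ℤ) * ((a : ℤ) - 1) - 2 * (d : ℤ)) : ℤ) : K) • c := by
  funext γ
  simp only [low, rai, Pi.add_apply, Pi.smul_apply, smul_eq_mul, Finset.mul_sum]
  rw [Finset.sum_comm]
  rw [← sub_eq_iff_eq_add']
  rw [← Finset.sum_sub_distrib]
  have key : ∀ i : Fin n,
      ((∑ j, ((Function.update γ j (γ j + 1) i * (a - Function.update γ j (γ j + 1) i) : ℕ) : K)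
          * c (Function.update (Function.update γ j (γ j + 1)) i
              (Function.update γ j (γ j + 1) i - 1)))
        - ∑ j, ((γ i * (a - γ i) : ℕ) : K)
          * c (Function.update (Function.update γ i (γ i - 1)) j
              (Function.update γ i (γ i - 1) j + 1)))
      = ((((γ i + 1) * (a - (γ i + 1)) : ℕ) : K) - ((γ i * (a - γ i) : ℕ) : K)) * c γ := by
    intro i
    rw [← Finset.sum_sub_distrib]
    rw [Finset.sum_eq_single i]
    · simp only [Function.update_self, Function.update_idem]
      rw [Nat.add_sub_cancel, Function.update_eq_self]
      by_cases h0 : γ i = 0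
      · simp [h0]
      · have h1 : γ i - 1 + 1 = γ i := Nat.succ_pred_eq_of_pos (Nat.pos_of_ne_zero h0)
        rw [h1, Function.update_eq_self, sub_mul]
    · intro j _ hji
      have hij : i ≠ j := fun h => hji h.symm
      rw [Function.update_of_ne hij, Function.update_of_ne (fun h => hij h.symm)]
      rw [Function.update_comm hij]
      ring
    · intro h; exact absurd (Finset.mem_univ i) h
  calc (∑ i, ((∑ j, ((Function.update γ j (γ j + 1) i * (a - Function.update γ j (γ j + 1) i) : ℕ) : K)
          * c (Function.update (Function.update γ j (γ j + 1)) i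
              (Function.update γ j (γ j + 1) i - 1)))
        - ∑ j, ((γ i * (a - γ i) : ℕ) : K)
          * c (Function.update (Function.update γ i (γ i - 1)) j
              (Function.update γ i (γ i - 1) j + 1))))
      = ∑ i, ((((γ i + 1) * (a - (γ i + 1)) : ℕ) : K) - ((γ i * (a - γ i) : ℕ) : K)) * c γ :=
        Finset.sum_congr rfl (fun i _ => key i)
    _ = ((((n : ℤ) * ((a : ℤ) - 1) - 2 * (d : ℤ)) : ℤ) : K) * c γ := by
        by_cases hγ : c γ = 0
        · simp [hγ]
        · have hbox : ∀ i, γ i < a := by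
            intro i; by_contra h; push_neg at h; exact hγ (hb γ i h)
          have hd : ∑ i, γ i = d := hh γ hγ
          rw [← Finset.sum_mul]
          congr 1
          have step : ∀ i : Fin n,
              ((((γ i + 1) * (a - (γ i + 1)) : ℕ) : K) - ((γ i * (a - γ i) : ℕ) : K))
              = ((((a : ℤ) - 1 - 2 * (γ i : ℤ)) : ℤ) : K) := by
            intro i
            have h1 : (((γ i + 1) * (a - (γ i + 1)) : ℕ) : ℤ)
                = ((γ i : ℤ) + 1) * ((a : ℤ) - ((γ i : ℤ) + 1)) := by
              rw [Nat.cast_mul, Nat.cast_sub (hbox i)]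
              push_cast; ring
            have h2 : ((γ i * (a - γ i) : ℕ) : ℤ) = (γ i : ℤ) * ((a : ℤ) - (γ i : ℤ)) := by
              rw [Nat.cast_mul, Nat.cast_sub (le_of_lt (hbox i))]
            have h3 : (((γ i + 1) * (a - (γ i + 1)) : ℕ) : ℤ) - ((γ i * (a - γ i) : ℕ) : ℤ)
                = (a : ℤ) - 1 - 2 * (γ i : ℤ) := by rw [h1, h2]; ring
            calc ((((γ i + 1) * (a - (γ i + 1)) : ℕ) : K) - ((γ i * (a - γ i) : ℕ) : K))
                = (((((γ i + 1) * (a - (γ i + 1)) : ℕ) : ℤ)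
                    - ((γ i * (a - γ i) : ℕ) : ℤ) : ℤ) : K) := by push_cast; ring
              _ = ((((a : ℤ) - 1 - 2 * (γ i : ℤ)) : ℤ) : K) := by rw [h3]
          rw [Finset.sum_congr rfl (fun i _ => step i)]
          rw [← Int.cast_sum]
          congr 1
          rw [Finset.sum_sub_distrib, Finset.sum_const, Finset.card_univ, Fintype.card_fin,
            ← Finset.mul_sum]
          have hsum : ((∑ i, (γ i : ℤ))) = (d : ℤ) := by
            rw [← Nat.cast_sum]; exact_mod_cast congrArg (Nat.cast : ℕ → ℤ) hd
          rw [hsum]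
          ring

lemma no_such [CharZero K] {n a t : ℕ} (ha : 0 < a) (hw : n * (a - 1) < 2 * t)
    (c₀ : M K n) (hb : Boxed a c₀) (hh : Homog t c₀) (hl : low c₀ = 0) (hc : c₀ ≠ 0) :
    False := by
  classical
  set na : ℤ := (n : ℤ) * ((a : ℤ) - 1) with hna_def
  have hna : ((n * (a - 1) : ℕ) : ℤ) = na := by
    rw [Nat.cast_mul, Nat.cast_sub ha]; push_cast; ring
  have hw' : na < 2 * (t : ℤ) := by
    rw [← hna]; exact_mod_cast hw
  set cseq : ℕ → M K n := fun k => (rai a)^[k] c₀ with hcseq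
  have hsucc : ∀ k, cseq (k + 1) = rai a (cseq k) := by
    intro k; simp only [hcseq, Function.iterate_succ_apply']
  have bseq : ∀ k, Boxed a (cseq k) := by
    intro k; induction k with
    | zero => exact hb
    | succ k ih => rw [hsucc]; exact boxed_rai ih
  have hseq : ∀ k, Homog (t + k) (cseq k) := by
    intro k; induction k with
    | zero => exact hh
    | succ k ih => rw [hsucc, ← Nat.add_assoc]; exact homog_rai ih
  set lam : ℕ → ℤ := fun k => -((k : ℤ) + 1) * ((2 * t - na) + k) with hlam
  have LAM : ∀ k, low (cseq (k + 1)) = ((lam k : ℤ) : K) • cseq k := by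
    intro k; induction k with
    | zero =>
      rw [hsucc, comm (cseq 0) (bseq 0) (by simpa using hseq 0), show cseq 0 = c₀ from rfl,
        hl, rai_zero, zero_add]
      congr 1
      simp only [hlam, hna_def]
      push_cast
      ring
    | succ k ih =>
      rw [hsucc (k + 1), comm (cseq (k + 1)) (bseq (k + 1)) (hseq (k + 1)), ih, rai_smul,
        ← hsucc k, ← add_smul]
      have hz : lam k + ((n : ℤ) * ((a : ℤ) - 1) - 2 * (((t + (k + 1) : ℕ)) : ℤ))
          = lam (k + 1) := by
        simp only [hlam, hna_def]; push_cast; ring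
      rw [← Int.cast_add, hz]
  have hfin : cseq (n * (a - 1) + 1) = 0 :=
    vanish (bseq _) (hseq _) (by omega)
  have hex : ∃ k, cseq k = 0 := ⟨_, hfin⟩
  have hk00 : Nat.find hex ≠ 0 := by
    intro h
    have hspec := Nat.find_spec hex
    rw [h] at hspec
    exact hc (by simpa [hcseq] using hspec)
  obtain ⟨m, hm⟩ := Nat.exists_eq_succ_of_ne_zero hk00
  have hzero : cseq (m + 1) = 0 := by
    rw [show m + 1 = Nat.find hex by omega]
    exact Nat.find_spec hex
  have hnz : cseq m ≠ 0 := Nat.find_min hex (by omega)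
  have h0 : ((lam m : ℤ) : K) • cseq m = 0 := by
    rw [← LAM m, hzero, low_zero]
  obtain ⟨γ, hγ⟩ := Function.ne_iff.mp hnz
  have hprod : ((lam m : ℤ) : K) * cseq m γ = 0 := congrFun h0 γ
  have hlam0 : (lam m : ℤ) = 0 := by
    rcases mul_eq_zero.mp hprod with h | h
    · exact_mod_cast h
    · exact absurd h (by simpa using hγ)
  have hpos : (0 : ℤ) < ((m : ℤ) + 1) * ((2 * t - na) + m) := by
    apply mul_pos <;> [positivity; omega]
  simp only [hlam, neg_mul, neg_eq_zero] at hlam0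
  exact absurd hlam0 (ne_of_gt hpos)

end GorAux

/-- **Socle-degree bound for artinian Gorenstein quotients
(Corollary `c:basecase` (2)).**
Over a field of characteristic zero, let `I` be a homogeneous ideal of
`R = K[x_1, …, x_n]` such that `R/I` is artinian Gorenstein (finite
dimensional with one-dimensional socle).  If `x_i^a ∈ I` for every `i` and
`x_1 + ⋯ + x_n ∈ I`, then the socle degree of `R/I` is at most `n(a-1)/2`,
i.e. `(R/I)_t = 0` whenever `2t > n(a-1)`. -/
theorem gorenstein_socle_degree_bound (K : Type) [Field K] [CharZero K]
    {n a : ℕ} (ha : 0 < a) (I : Ideal (MvPolynomial (Fin n) K))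
    (hIhom : ∀ f ∈ I, ∀ s : ℕ, MvPolynomial.homogeneousComponent s f ∈ I)
    (hart : FiniteDimensional K (MvPolynomial (Fin n) K ⧸ I))
    (hgor : Module.finrank K (socle K I) = 1)
    (hpow : ∀ i : Fin n, (X i : MvPolynomial (Fin n) K) ^ a ∈ I)
    (hL : (∑ i, X i) ∈ I) :
    ∀ t : ℕ, n * (a - 1) < 2 * t → quotComponent K I t = ⊥ := by
  intro t ht
  by_contra hne
  obtain ⟨x, hx, hx0⟩ := (Submodule.ne_bot_iff _).mp hne
  obtain ⟨p, hp, hpx⟩ := hx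
  haveI : Nontrivial (MvPolynomial (Fin n) K ⧸ I) := nontrivial_of_ne x 0 hx0
  obtain ⟨ψ, hψ⟩ : ∃ ψ : Module.Dual K (MvPolynomial (Fin n) K ⧸ I), ψ x ≠ 0 := by
    by_contra h
    push_neg at h
    exact hx0 ((Module.forall_dual_apply_eq_zero_iff K x).mp h)
  set φ : MvPolynomial (Fin n) K →ₗ[K] K :=
    ψ.comp (Ideal.Quotient.mkₐ K I).toLinearMap with hφdef
  have hφI : ∀ q ∈ I, φ q = 0 := by
    intro q hq
    have hq0 : (Ideal.Quotient.mkₐ K I).toLinearMap q = 0 := by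
      simpa using (Ideal.Quotient.eq_zero_iff_mem).mpr hq
    rw [hφdef, LinearMap.comp_apply, hq0, map_zero]
  set c₀ : GorAux.M K n := fun γ =>
    if (∑ i, γ i) = t then φ (monomial (Finsupp.equivFunOnFinite.symm γ) 1) else 0 with hc₀
  have hh : GorAux.Homog t c₀ := by
    intro γ hγ
    by_contra h
    simp [hc₀, h] at hγ
  have hb : GorAux.Boxed a c₀ := by
    intro γ i hi
    simp only [hc₀]
    split_ifs with hs
    · apply hφI
      have hfe : (Finsupp.equivFunOnFinite.symm γ - Finsupp.single i a)
              + Finsupp.single i a = Finsupp.equivFunOnFinite.symm γ := by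
        ext j
        by_cases hj : j = i
        · subst hj
          simp only [Finsupp.add_apply, Finsupp.tsub_apply, Finsupp.single_eq_same,
            Finsupp.coe_equivFunOnFinite_symm]
          omega
        · simp [Finsupp.tsub_apply, Finsupp.single_apply, Ne.symm hj]
      have key := congrArg (fun s => (monomial s (1 : K) : MvPolynomial (Fin n) K)) hfe
      rw [← key, monomial_add_single]
      exact Ideal.mul_mem_left I _ (hpow i)
    · rfl
  have hl : GorAux.low c₀ = 0 := by
    funext γ
    simp only [GorAux.low, Pi.zero_apply]
    by_cases hs : (∑ k, γ k) + 1 = t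
    · have step : ∀ i : Fin n, c₀ (Function.update γ i (γ i + 1))
          = φ (monomial (Finsupp.equivFunOnFinite.symm (Function.update γ i (γ i + 1))) 1) := by
        intro i
        simp only [hc₀, GorAux.sum_update_succ γ i, hs, if_true]
      rw [Finset.sum_congr rfl (fun i _ => step i), ← map_sum]
      have hmono : ∀ i : Fin n,
          (monomial (Finsupp.equivFunOnFinite.symm (Function.update γ i (γ i + 1))) (1 : K))
          = X i * monomial (Finsupp.equivFunOnFinite.symm γ) 1 := by
        intro i
        have hfe2 : Finsupp.single i 1 + Finsupp.equivFunOnFinite.symm γ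
            = Finsupp.equivFunOnFinite.symm (Function.update γ i (γ i + 1)) := by
          ext j
          by_cases hj : j = i
          · subst hj
            simp only [Finsupp.add_apply, Finsupp.single_eq_same,
              Finsupp.coe_equivFunOnFinite_symm, Function.update_self]
            omega
          · simp [Finsupp.single_apply, Ne.symm hj, Function.update_of_ne hj]
        have key2 := congrArg (fun s => (monomial s (1 : K) : MvPolynomial (Fin n) K)) hfe2
        rw [← key2, monomial_single_add, pow_one]
      rw [Finset.sum_congr rfl (fun i _ => hmono i), ← Finset.sum_mul]
      exact hφI _ (Ideal.mul_mem_right _ I hL)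
    · apply Finset.sum_eq_zero
      intro i _
      simp only [hc₀, GorAux.sum_update_succ γ i, hs, if_false]
  have hφp : φ p ≠ 0 := by
    have : φ p = ψ x := by rw [hφdef, LinearMap.comp_apply, hpx]
    rw [this]; exact hψ
  have hc : c₀ ≠ 0 := by
    intro h0
    apply hφp
    rw [MvPolynomial.as_sum p, map_sum]
    apply Finset.sum_eq_zero
    intro v hv
    have hdeg : ∑ i, v i = t := by
      have h1 := (mem_homogeneousSubmodule t p).mp hp (Finsupp.mem_support_iff.mp hv)
      have h2 : v.degree = ∑ i, v i :=
        Finset.sum_subset (Finset.subset_univ _)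
          (fun x _ hx => Finsupp.notMem_support_iff.mp hx)
      rw [Finsupp.degree_eq_weight_one] at h2
      rw [← h2]; exact h1
    have hzero := congrFun h0 (⇑v)
    simp only [hc₀, hdeg, if_true, Pi.zero_apply, Finsupp.equivFunOnFinite_symm_coe] at hzero
    have : monomial v (coeff v p) = coeff v p • monomial v (1 : K) := by
      rw [MvPolynomial.smul_monomial, smul_eq_mul, mul_one]
    rw [this, map_smul, hzero, smul_zero]
  exact GorAux.no_such ha ht c₀ hb hh hl hc
end

section
/- Let K be a field, let Δ be a graph (a 1-dimensional simplicial complex) with v vertices and e edges, and let a ≥ 2 be an integer. Then the Hilbert function of A_Δ(a) = R/(I_Δ + (x_1^a,…,x_v^a)) satisfies: dim_K A_Δ(a)_t = 1 if t = 0; dim_K A_Δ(a)_t = v + (t−1)e if 0 < t < a; dim_K A_Δ(a)_t = e(2a − t − 1) if a ≤ t ≤ 2a−2; and dim_K A_Δ(a)_t = 0 if t > 2a−2. In particular, the socle degree of A_Δ(a) is 2a−2, and dim_K A_Δ(a)_{a−1} − dim_K A_Δ(a)_a = v − e, so this difference is negative, zero, or positive according to whether v < e, v = e, or v > e. -/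
open MvPolynomial
open scoped Classical

/-- The defining ideal of `A_Δ(a) = R/(I_Δ + (x_1^a, …, x_n^a))`. -/
noncomputable def AIdeal (K : Type) [Field K] {n : ℕ}
    (Δ : Finset (Finset (Fin n))) (a : ℕ) : Ideal (MvPolynomial (Fin n) K) :=
  SRIdeal K Δ + powersIdeal K n fun _ => a
def genSet {n : ℕ} (Δ : Finset (Finset (Fin n))) (a : ℕ) : Set (Fin n →₀ ℕ) :=
  {d | ∃ σ : Finset (Fin n), σ ∉ Δ ∧ d = ∑ i ∈ σ, Finsupp.single i 1} ∪
    Set.range fun i : Fin n => Finsupp.single i a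

lemma AIdeal_eq (K : Type) [Field K] {n : ℕ} (Δ : Finset (Finset (Fin n))) (a : ℕ) :
    AIdeal K Δ a = Ideal.span ((fun d => monomial d (1 : K)) '' genSet Δ a) := by
  unfold AIdeal SRIdeal powersIdeal genSet
  rw [Submodule.add_eq_sup, ← Ideal.span_union, Set.image_union]
  congr 1
  ext m
  simp only [Set.mem_union, Set.mem_setOf_eq, Set.mem_range, Set.mem_image]
  constructor
  · rintro (⟨σ, hσ, rfl⟩ | ⟨i, rfl⟩)
    · exact Or.inl ⟨∑ i ∈ σ, Finsupp.single i 1, ⟨σ, hσ, rfl⟩, by rw [monomial_sum_one]; rfl⟩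
    · exact Or.inr ⟨Finsupp.single i a, ⟨i, rfl⟩, (X_pow_eq_monomial ..).symm⟩
  · rintro (⟨d, ⟨σ, hσ, rfl⟩, rfl⟩ | ⟨d, ⟨i, rfl⟩, rfl⟩)
    · exact Or.inl ⟨σ, hσ, by rw [monomial_sum_one]; rfl⟩
    · exact Or.inr ⟨i, (X_pow_eq_monomial ..)⟩

lemma indicator_apply {n : ℕ} (σ : Finset (Fin n)) (j : Fin n) :
    (∑ i ∈ σ, Finsupp.single i 1 : Fin n →₀ ℕ) j = if j ∈ σ then 1 else 0 := by
  rw [Finset.sum_apply']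
  simp [Finsupp.single_apply, Finset.sum_ite_eq]

lemma exists_le_iff {n : ℕ} {Δ : Finset (Finset (Fin n))} (hc : IsComplex Δ) (a : ℕ)
    (d : Fin n →₀ ℕ) :
    (∃ si ∈ genSet Δ a, si ≤ d) ↔ ¬ (d.support ∈ Δ ∧ ∀ i, d i < a) := by
  constructor
  · rintro ⟨si, (⟨σ, hσ, rfl⟩ | ⟨i, rfl⟩), hle⟩
    · rintro ⟨hsup, -⟩
      refine hσ (hc.2 _ hsup σ fun i hi => ?_)
      have := hle i
      rw [indicator_apply, if_pos hi] at this
      simp only [Finsupp.mem_support_iff]; omega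
    · rintro ⟨-, hlt⟩
      have := hle i
      rw [Finsupp.single_apply, if_pos rfl] at this
      exact absurd (hlt i) (not_lt.mpr this)
  · intro h
    rw [not_and_or] at h
    rcases h with h | h
    · refine ⟨∑ i ∈ d.support, Finsupp.single i 1, Or.inl ⟨d.support, h, rfl⟩, fun j => ?_⟩
      rw [indicator_apply]
      split
      · next hj => exact Nat.one_le_iff_ne_zero.mpr (Finsupp.mem_support_iff.mp hj)
      · exact Nat.zero_le _
    · push_neg at h
      obtain ⟨i, hi⟩ := h
      refine ⟨Finsupp.single i a, Or.inr ⟨i, rfl⟩, fun j => ?_⟩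
      rw [Finsupp.single_apply]
      split
      · next hj => exact hj ▸ hi
      · exact Nat.zero_le _

noncomputable def expSet {n : ℕ} (Δ : Finset (Finset (Fin n))) (a s : ℕ) :
    Finset (Fin n →₀ ℕ) :=
  ((Finset.univ : Finset (Fin n)).finsuppAntidiag s).filter
    fun d => d.support ∈ Δ ∧ ∀ i, d i < a

lemma mem_expSet_iff {n : ℕ} {Δ : Finset (Finset (Fin n))} {a s : ℕ} {d : Fin n →₀ ℕ} :
    d ∈ expSet Δ a s ↔ d.degree = s ∧ (d.support ∈ Δ ∧ ∀ i, d i < a) := by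
  rw [expSet, Finset.mem_filter, Finset.mem_finsuppAntidiag]
  have : Finset.univ.sum ⇑d = d.degree := by
    rw [Finsupp.degree_apply]
    exact (Finset.sum_subset (Finset.subset_univ _)
      (by simp +contextual [Finsupp.notMem_support_iff])).symm
  rw [this]
  simp

lemma monomial_mem {K : Type} [Field K] {n : ℕ} {Δ : Finset (Finset (Fin n))}
    (hc : IsComplex Δ) {a : ℕ} {d : Fin n →₀ ℕ}
    (h : ¬ (d.support ∈ Δ ∧ ∀ i, d i < a)) (c : K) : monomial d c ∈ AIdeal K Δ a := by
  rw [AIdeal_eq, mem_ideal_span_monomial_image]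
  intro xi hxi
  rw [support_monomial] at hxi
  rcases eq_or_ne c 0 with rfl | hc0
  · simp at hxi
  · rw [if_neg hc0, Finset.mem_singleton] at hxi
    subst hxi
    exact (exists_le_iff hc a xi).mpr h

lemma not_good_of_mem {K : Type} [Field K] {n : ℕ} {Δ : Finset (Finset (Fin n))}
    (hc : IsComplex Δ) {a : ℕ} {p : MvPolynomial (Fin n) K}
    (hp : p ∈ AIdeal K Δ a) {d : Fin n →₀ ℕ} (hd : d ∈ p.support) :
    ¬ (d.support ∈ Δ ∧ ∀ i, d i < a) := by
  rw [AIdeal_eq, mem_ideal_span_monomial_image] at hp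
  exact (exists_le_iff hc a d).mp (hp d hd)

lemma quotDim_eq_card (K : Type) [Field K] {n : ℕ} {Δ : Finset (Finset (Fin n))}
    (hc : IsComplex Δ) (a s : ℕ) :
    quotDim K (AIdeal K Δ a) s = (expSet Δ a s).card := by
  classical
  set J := AIdeal K Δ a with hJ
  set b : {d // d ∈ expSet Δ a s} → MvPolynomial (Fin n) K ⧸ J :=
    fun d => Ideal.Quotient.mk J (monomial (d : Fin n →₀ ℕ) 1) with hb
  have hsm : ∀ (c : K) (d : Fin n →₀ ℕ), (Ideal.Quotient.mk J) (monomial d c)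
      = c • (Ideal.Quotient.mk J) (monomial d 1) := by
    intro c d
    have h1 : monomial d c = c • monomial d (1 : K) := by
      rw [smul_monomial, smul_eq_mul, mul_one]
    rw [h1]
    exact (Ideal.Quotient.mkₐ K J).toLinearMap.map_smul c (monomial d 1)
  have hli : LinearIndependent K b := by
    rw [linearIndependent_iff]
    intro l hl
    set p : MvPolynomial (Fin n) K :=
      ∑ d ∈ l.support, monomial (d : Fin n →₀ ℕ) (l d) with hp
    have hmk : Ideal.Quotient.mk J p = 0 := by
      rw [hp, map_sum, ← hl, Finsupp.linearCombination_apply, Finsupp.sum]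
      exact Finset.sum_congr rfl fun d hd => (hsm (l d) d)
    have hpJ : p ∈ J := (Ideal.Quotient.eq_zero_iff_mem).mp hmk
    ext e
    by_contra he
    have hes : e ∈ l.support := Finsupp.mem_support_iff.mpr he
    have hcoeff : coeff (e : Fin n →₀ ℕ) p = l e := by
      rw [hp, coeff_sum]
      rw [Finset.sum_eq_single e]
      · rw [coeff_monomial, if_pos rfl]
      · intro d _ hde
        rw [coeff_monomial, if_neg (fun h => hde (Subtype.coe_injective h))]
      · exact fun h => absurd hes h
    have hsup : (e : Fin n →₀ ℕ) ∈ p.support :=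
      mem_support_iff.mpr (by rw [hcoeff]; exact he)
    exact not_good_of_mem hc hpJ hsup (mem_expSet_iff.mp e.2).2
  have hspan : quotComponent K J s = Submodule.span K (Set.range b) := by
    apply le_antisymm
    · rintro x ⟨p, hpmem, rfl⟩
      have hph : MvPolynomial.IsHomogeneous p s := hpmem
      show Ideal.Quotient.mk J p ∈ _
      rw [p.as_sum, map_sum]
      refine Submodule.sum_mem _ fun d hd => ?_
      have hdeg : d.degree = s := by
        rw [Finsupp.degree_eq_weight_one]
        exact hph (mem_support_iff.mp hd)
      by_cases hgood : d.support ∈ Δ ∧ ∀ i, d i < a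
      · have hdm : d ∈ expSet Δ a s := mem_expSet_iff.mpr ⟨hdeg, hgood⟩
        rw [hsm (coeff d p) d]
        exact Submodule.smul_mem _ _ (Submodule.subset_span ⟨⟨d, hdm⟩, rfl⟩)
      · rw [Ideal.Quotient.eq_zero_iff_mem.mpr (monomial_mem hc hgood _)]
        exact Submodule.zero_mem _
    · rw [Submodule.span_le]
      rintro x ⟨d, rfl⟩
      refine ⟨monomial (d : Fin n →₀ ℕ) 1, ?_, rfl⟩
      exact isHomogeneous_monomial _ (mem_expSet_iff.mp d.2).1
  rw [quotDim, hspan, finrank_span_eq_card hli, Fintype.card_coe]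

noncomputable def compSet {n : ℕ} (a s : ℕ) (σ : Finset (Fin n)) : Finset (Fin n →₀ ℕ) :=
  ((Finset.univ : Finset (Fin n)).finsuppAntidiag s).filter
    fun d => d.support = σ ∧ ∀ i, d i < a

lemma mem_compSet_iff {n : ℕ} {a s : ℕ} {σ : Finset (Fin n)} {d : Fin n →₀ ℕ} :
    d ∈ compSet a s σ ↔ d.degree = s ∧ d.support = σ ∧ ∀ i, d i < a := by
  rw [compSet, Finset.mem_filter, Finset.mem_finsuppAntidiag]
  have : Finset.univ.sum ⇑d = d.degree := by
    rw [Finsupp.degree_apply]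
    exact (Finset.sum_subset (Finset.subset_univ _)
      (by simp +contextual [Finsupp.notMem_support_iff])).symm
  rw [this]
  simp

lemma degree_single {n : ℕ} (i : Fin n) (b : ℕ) : (Finsupp.single i b).degree = b := by
  rcases eq_or_ne b 0 with rfl | hb
  · simp [map_zero]
  · rw [Finsupp.degree_apply, Finsupp.support_single_ne_zero _ hb, Finset.sum_singleton,
      Finsupp.single_eq_same]

lemma degree_add {n : ℕ} (f g : Fin n →₀ ℕ) : (f + g).degree = f.degree + g.degree := by
  simp [Finsupp.degree_eq_weight_one, map_add]

lemma expSet_eq_biUnion {n : ℕ} (Δ : Finset (Finset (Fin n))) (a s : ℕ) :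
    expSet Δ a s = Δ.biUnion (compSet a s) := by
  ext d
  simp only [mem_expSet_iff, Finset.mem_biUnion, mem_compSet_iff]
  constructor
  · rintro ⟨h1, h2, h3⟩
    exact ⟨d.support, h2, h1, rfl, h3⟩
  · rintro ⟨σ, hσ, h1, rfl, h3⟩
    exact ⟨h1, hσ, h3⟩

lemma card_compSet_zero {n : ℕ} (a s : ℕ) (ha : 2 ≤ a) :
    (compSet a s (∅ : Finset (Fin n))).card = if s = 0 then 1 else 0 := by
  split
  · next hs =>
    subst hs
    rw [Finset.card_eq_one]
    refine ⟨0, ?_⟩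
    ext d
    rw [mem_compSet_iff, Finset.mem_singleton]
    constructor
    · rintro ⟨h1, h2, h3⟩
      exact Finsupp.support_eq_empty.mp h2
    · rintro rfl
      exact ⟨map_zero _, Finsupp.support_zero, fun i => by simp; omega⟩
  · next hs =>
    rw [Finset.card_eq_zero]
    ext d
    simp only [mem_compSet_iff, Finset.notMem_empty, iff_false]
    rintro ⟨h1, h2, h3⟩
    rw [Finsupp.support_eq_empty.mp h2] at h1
    exact hs (by rw [← h1, map_zero])

lemma card_compSet_one {n : ℕ} (a s : ℕ) (i : Fin n) :
    (compSet a s ({i} : Finset (Fin n))).card = if 0 < s ∧ s < a then 1 else 0 := by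
  split
  · next hs =>
    rw [Finset.card_eq_one]
    refine ⟨Finsupp.single i s, ?_⟩
    ext d
    rw [mem_compSet_iff, Finset.mem_singleton]
    constructor
    · rintro ⟨h1, h2, h3⟩
      obtain ⟨hne, hd⟩ := Finsupp.support_eq_singleton.mp h2
      rw [hd, degree_single] at h1
      rw [hd, h1]
    · rintro rfl
      refine ⟨degree_single i s, Finsupp.support_single_ne_zero _ (by omega), fun j => ?_⟩
      rw [Finsupp.single_apply]
      split <;> omega
  · next hs =>
    rw [Finset.card_eq_zero]
    ext d
    simp only [mem_compSet_iff, Finset.notMem_empty, iff_false]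
    rintro ⟨h1, h2, h3⟩
    obtain ⟨hne, hd⟩ := Finsupp.support_eq_singleton.mp h2
    rw [hd, degree_single] at h1
    have := h3 i
    omega

lemma card_compSet_two {n : ℕ} (a s : ℕ) {i j : Fin n} (hij : i ≠ j) :
    (compSet a s ({i, j} : Finset (Fin n))).card = min s a - max 1 (s + 1 - a) := by
  rw [← Nat.card_Ico (max 1 (s + 1 - a)) (min s a)]
  apply Finset.card_bij' (fun d _ => d i)
    (fun b _ => Finsupp.single i b + Finsupp.single j (s - b))
  · -- maps into Ico
    intro d hd
    rw [mem_compSet_iff] at hd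
    obtain ⟨h1, h2, h3⟩ := hd
    have hdi : d i ≠ 0 := by
      have : i ∈ d.support := h2 ▸ Finset.mem_insert_self i {j}
      exact Finsupp.mem_support_iff.mp this
    have hdj : d j ≠ 0 := by
      have : j ∈ d.support := h2 ▸ Finset.mem_insert_of_mem (Finset.mem_singleton_self j)
      exact Finsupp.mem_support_iff.mp this
    have hsum : d i + d j = s := by
      rw [Finsupp.degree_apply, h2, Finset.sum_pair hij] at h1
      exact h1
    have h3i := h3 i
    have h3j := h3 j
    rw [Finset.mem_Ico]
    omega
  · -- reverse maps into compSet
    intro b hb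
    rw [Finset.mem_Ico] at hb
    have hb1 : 1 ≤ b := le_trans (le_max_left _ _) hb.1
    have hb2 : b < a := lt_of_lt_of_le hb.2 (min_le_right _ _)
    have hbs : b < s := lt_of_lt_of_le hb.2 (min_le_left _ _)
    have hsb : s - b < a := by
      have := le_trans (le_max_right _ _) hb.1
      omega
    rw [mem_compSet_iff]
    refine ⟨?_, ?_, ?_⟩
    · rw [degree_add, degree_single, degree_single]; omega
    · rw [Finsupp.support_add_eq, Finsupp.support_single_ne_zero _ (by omega),
        Finsupp.support_single_ne_zero _ (by omega)]
      · rfl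
      · rw [Finsupp.support_single_ne_zero _ (by omega),
          Finsupp.support_single_ne_zero _ (by omega)]
        simpa using hij
    · intro k
      rw [Finsupp.add_apply, Finsupp.single_apply, Finsupp.single_apply]
      split <;> split <;> omega
  · -- left inverse
    intro d hd
    rw [mem_compSet_iff] at hd
    obtain ⟨h1, h2, h3⟩ := hd
    have hsum : d i + d j = s := by
      rw [Finsupp.degree_apply, h2, Finset.sum_pair hij] at h1
      exact h1
    ext k
    rw [Finsupp.add_apply, Finsupp.single_apply, Finsupp.single_apply]
    by_cases hki : k = i
    · subst hki
      rw [if_pos rfl, if_neg (fun h => hij h.symm), add_zero]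
    · by_cases hkj : k = j
      · subst hkj
        rw [if_neg (fun h => hki h.symm), if_pos rfl, zero_add]
        omega
      · rw [if_neg (fun h => hki h.symm), if_neg (fun h => hkj h.symm), add_zero]
        symm
        apply Finsupp.notMem_support_iff.mp
        rw [h2]
        simp [hki, hkj]
  · -- right inverse
    intro b hb
    rw [Finsupp.add_apply, Finsupp.single_eq_same, Finsupp.single_eq_of_ne' (Ne.symm hij),
      add_zero]

lemma filter_card_one_eq {n : ℕ} {Δ : Finset (Finset (Fin n))}
    (hverts : ∀ i : Fin n, ({i} : Finset (Fin n)) ∈ Δ) :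
    Δ.filter (fun σ => σ.card = 1) = Finset.image (fun i => ({i} : Finset (Fin n)))
      Finset.univ := by
  ext σ
  simp only [Finset.mem_filter, Finset.mem_image, Finset.mem_univ, true_and]
  constructor
  · rintro ⟨hσ, hcard⟩
    obtain ⟨i, rfl⟩ := Finset.card_eq_one.mp hcard
    exact ⟨i, rfl⟩
  · rintro ⟨i, rfl⟩
    exact ⟨hverts i, Finset.card_singleton i⟩

lemma faceCount_one {n : ℕ} {Δ : Finset (Finset (Fin n))}
    (hverts : ∀ i : Fin n, ({i} : Finset (Fin n)) ∈ Δ) : faceCount Δ 1 = n := by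
  rw [faceCount, filter_card_one_eq hverts,
    Finset.card_image_of_injective _ Finset.singleton_injective, Finset.card_univ,
    Fintype.card_fin]

lemma card_expSet_eq {n : ℕ} {Δ : Finset (Finset (Fin n))} {a : ℕ}
    (hc : IsComplex Δ) (hcard : ∀ σ ∈ Δ, σ.card ≤ 2)
    (hverts : ∀ i : Fin n, ({i} : Finset (Fin n)) ∈ Δ) (ha : 2 ≤ a) (s : ℕ) :
    (expSet Δ a s).card =
      (if s = 0 then 1 else 0) + (if 0 < s ∧ s < a then 1 else 0) * n
        + (min s a - max 1 (s + 1 - a)) * faceCount Δ 2 := by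
  classical
  set N0 := if s = 0 then 1 else 0 with hN0
  set N1 := if 0 < s ∧ s < a then 1 else 0 with hN1
  set N2 := min s a - max 1 (s + 1 - a) with hN2
  set g : ℕ → ℕ := fun k => if k = 0 then N0 else if k = 1 then N1 else N2 with hg
  rw [expSet_eq_biUnion, Finset.card_biUnion]
  · have hval : ∀ σ ∈ Δ, (compSet a s σ).card = g σ.card := by
      intro σ hσ
      have h2 := hcard σ hσ
      interval_cases h : σ.card
      · rw [Finset.card_eq_zero.mp h]
        rw [card_compSet_zero _ _ ha]
        simp [hg, hN0]
      · obtain ⟨i, rfl⟩ := Finset.card_eq_one.mp h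
        rw [card_compSet_one]
        simp [hg, hN1]
      · obtain ⟨i, j, hij, rfl⟩ := Finset.card_eq_two.mp h
        rw [card_compSet_two _ _ hij]
        simp [hg, hN2]
    rw [Finset.sum_congr rfl hval]
    rw [← Finset.sum_filter_add_sum_filter_not Δ (fun σ => σ.card = 0)]
    rw [← Finset.sum_filter_add_sum_filter_not (Δ.filter fun σ => ¬σ.card = 0)
      (fun σ => σ.card = 1)]
    have e0 : Δ.filter (fun σ => σ.card = 0) = {∅} := by
      ext σ
      simp only [Finset.mem_filter, Finset.card_eq_zero, Finset.mem_singleton]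
      exact ⟨fun h => h.2, fun h => ⟨h ▸ hc.1, h⟩⟩
    have e1 : (Δ.filter fun σ => ¬σ.card = 0).filter (fun σ => σ.card = 1)
        = Δ.filter (fun σ => σ.card = 1) := by
      rw [Finset.filter_filter]
      apply Finset.filter_congr
      intro σ _
      omega
    have e2 : (Δ.filter fun σ => ¬σ.card = 0).filter (fun σ => ¬σ.card = 1)
        = Δ.filter (fun σ => σ.card = 2) := by
      rw [Finset.filter_filter]
      apply Finset.filter_congr
      intro σ hσ
      have := hcard σ hσ
      omega
    rw [e1, e2, e0]
    rw [Finset.sum_singleton]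
    have s1 : ∑ σ ∈ Δ.filter (fun σ => σ.card = 1), g σ.card = N1 * n := by
      have h : ∀ σ ∈ Δ.filter (fun σ => σ.card = 1), g σ.card = N1 := by
        intro σ hσ
        rw [(Finset.mem_filter.mp hσ).2]
        simp [hg]
      have hn : (Δ.filter fun σ => σ.card = 1).card = n := faceCount_one hverts
      rw [Finset.sum_congr rfl h, Finset.sum_const, smul_eq_mul, hn, mul_comm]
    have s2 : ∑ σ ∈ Δ.filter (fun σ => σ.card = 2), g σ.card = N2 * faceCount Δ 2 := by
      have h : ∀ σ ∈ Δ.filter (fun σ => σ.card = 2), g σ.card = N2 := by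
        intro σ hσ
        rw [(Finset.mem_filter.mp hσ).2]
        simp [hg]
      rw [Finset.sum_congr rfl h, Finset.sum_const, smul_eq_mul, mul_comm]
      rfl
    rw [s1, s2]
    have h0 : g (∅ : Finset (Fin n)).card = N0 := by simp [hg]
    rw [h0]
    ring
  · intro σ hσ τ hτ hστ
    rw [Function.onFun, Finset.disjoint_left]
    intro d hdσ hdτ
    rw [mem_compSet_iff] at hdσ hdτ
    exact hστ (by rw [← hdσ.2.1, ← hdτ.2.1])

/-- **The Hilbert function of `A_Δ(a)` for a graph `Δ` (Lemma `l:hilbert`).**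
For a graph `Δ` (a `1`-dimensional complex on `n` vertices) with `e` edges and
`a ≥ 2`, the Hilbert function of `A_Δ(a)` is `1` in degree `0`,
`n + (t-1)e` for `0 < t < a`, `e(2a - t - 1)` for `a ≤ t ≤ 2a-2` and `0` for
`t > 2a-2`.  In particular (when `e > 0`) the socle degree of `A_Δ(a)` is
`2a-2`, and `dim A_Δ(a)_{a-1} - dim A_Δ(a)_a = n - e`. -/
theorem graph_hilbert_function (K : Type) [Field K]
    {n a : ℕ} (Δ : Finset (Finset (Fin n)))
    (hcomplex : IsComplex Δ) (hcard : ∀ σ ∈ Δ, σ.card ≤ 2)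
    (hverts : ∀ i : Fin n, ({i} : Finset (Fin n)) ∈ Δ) (ha : 2 ≤ a) :
    quotDim K (AIdeal K Δ a) 0 = 1 ∧
    (∀ t : ℕ, 0 < t → t < a →
      quotDim K (AIdeal K Δ a) t = n + (t - 1) * faceCount Δ 2) ∧
    (∀ t : ℕ, a ≤ t → t ≤ 2 * a - 2 →
      quotDim K (AIdeal K Δ a) t = faceCount Δ 2 * (2 * a - t - 1)) ∧
    (∀ t : ℕ, 2 * a - 2 < t → quotDim K (AIdeal K Δ a) t = 0) ∧
    (0 < faceCount Δ 2 → quotDim K (AIdeal K Δ a) (2 * a - 2) ≠ 0) ∧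
    (quotDim K (AIdeal K Δ a) (a - 1) : ℤ) - (quotDim K (AIdeal K Δ a) a : ℤ) =
      (n : ℤ) - (faceCount Δ 2 : ℤ) := by
  have key : ∀ s : ℕ, quotDim K (AIdeal K Δ a) s =
      (if s = 0 then 1 else 0) + (if 0 < s ∧ s < a then 1 else 0) * n
        + (min s a - max 1 (s + 1 - a)) * faceCount Δ 2 := fun s => by
    rw [quotDim_eq_card K hcomplex a s, card_expSet_eq hcomplex hcard hverts ha s]
  refine ⟨?_, ?_, ?_, ?_, ?_, ?_⟩
  · rw [key 0, if_pos rfl, if_neg (by omega),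
      show min 0 a - max 1 (0 + 1 - a) = 0 by omega]
    simp
  · intro t ht1 ht2
    rw [key t, if_neg (by omega), if_pos ⟨ht1, ht2⟩,
      show min t a - max 1 (t + 1 - a) = t - 1 by omega, one_mul, zero_add]
  · intro t ht1 ht2
    rw [key t, if_neg (by omega), if_neg (by omega),
      show min t a - max 1 (t + 1 - a) = 2 * a - t - 1 by omega, zero_mul, zero_add,
      zero_add, mul_comm]
  · intro t ht
    rw [key t, if_neg (by omega), if_neg (by omega),
      show min t a - max 1 (t + 1 - a) = 0 by omega]
    simp
  · intro he
    rw [key (2 * a - 2), if_neg (by omega), if_neg (by omega),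
      show min (2 * a - 2) a - max 1 (2 * a - 2 + 1 - a) = 1 by omega, zero_mul,
      zero_add, zero_add, one_mul]
    omega
  · obtain ⟨a', rfl⟩ : ∃ a', a = a' + 2 := ⟨a - 2, by omega⟩
    rw [key (a' + 2 - 1), key (a' + 2), if_neg (by omega), if_pos (by omega),
      if_neg (by omega), if_neg (by omega),
      show min (a' + 2 - 1) (a' + 2) - max 1 (a' + 2 - 1 + 1 - (a' + 2)) = a' by omega,
      show min (a' + 2) (a' + 2) - max 1 (a' + 2 + 1 - (a' + 2)) = a' + 1 by omega,
      one_mul, zero_mul, zero_add, zero_add, zero_add]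
    push_cast
    ring
end

section
/- Let K be a field of characteristic zero, let Δ be a graph (a 1-dimensional simplicial complex) with e edges, let a > 1 be an integer, and let L = x_1 + ⋯ + x_v. Then the matrix representing the multiplication map ×L : A_Δ(a)_a → A_Δ(a)_{a+1} in the monomial bases is the (unsigned) vertex–edge incidence matrix of a disjoint union of e paths, each with a−1 vertices and a−2 edges (one path for each edge of Δ). In particular, ×L : A_Δ(a)_a → A_Δ(a)_{a+1} is surjective. -/
set_option maxHeartbeats 1000000
set_option synthInstance.maxHeartbeats 400000

open MvPolynomial
open scoped Classical

lemma prod_X_eq (K : Type) [Field K] {n : ℕ} (σ : Finset (Fin n)) :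
    (∏ i ∈ σ, X i : MvPolynomial (Fin n) K) = monomial (∑ i ∈ σ, Finsupp.single i 1) 1 := by
  classical
  induction σ using Finset.induction with
  | empty => simp [monomial_zero']
  | insert _ _ h ih =>
      rw [Finset.prod_insert h, Finset.sum_insert h, ih, X, monomial_mul, one_mul]

lemma AIdeal_eq_span (K : Type) [Field K] {n a : ℕ} (Δ : Finset (Finset (Fin n))) :
    AIdeal K Δ a = Ideal.span ((fun s => monomial s (1 : K)) ''
      ({s | ∃ σ : Finset (Fin n), σ ∉ Δ ∧ s = ∑ i ∈ σ, Finsupp.single i 1} ∪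
       Set.range fun i : Fin n => Finsupp.single i a)) := by
  rw [AIdeal, SRIdeal, powersIdeal, Set.image_union, Ideal.span_union, Submodule.add_eq_sup]
  congr 1
  · congr 1
    ext p
    constructor
    · rintro ⟨σ, hσ, rfl⟩; exact ⟨_, ⟨σ, hσ, rfl⟩, (prod_X_eq K σ).symm⟩
    · rintro ⟨_, ⟨σ, hσ, rfl⟩, rfl⟩; exact ⟨σ, hσ, (prod_X_eq K σ).symm⟩
  · congr 1
    ext p
    constructor
    · rintro ⟨i, rfl⟩
      refine ⟨_, ⟨i, rfl⟩, ?_⟩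
      simp [X_pow_eq_monomial]
    · rintro ⟨_, ⟨i, rfl⟩, rfl⟩
      exact ⟨i, X_pow_eq_monomial⟩

lemma indicator_le_iff {n : ℕ} (σ : Finset (Fin n)) (m : Fin n →₀ ℕ) :
    (∑ i ∈ σ, Finsupp.single i 1) ≤ m ↔ σ ⊆ m.support := by
  classical
  rw [Finsupp.le_def]
  constructor
  · intro h i hi
    have := h i
    rw [Finsupp.mem_support_iff]
    have hv : (∑ j ∈ σ, Finsupp.single j 1) i = 1 := by
      rw [Finset.sum_apply']
      rw [Finset.sum_eq_single i]
      · simp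
      · intro b _ hb; simp [Finsupp.single_apply, hb]
      · intro h'; exact absurd hi h'
    omega
  · intro h i
    rw [Finset.sum_apply']
    by_cases hi : i ∈ σ
    · rw [Finset.sum_eq_single i]
      · have := h hi
        rw [Finsupp.mem_support_iff] at this
        simp; omega
      · intro b _ hb; simp [Finsupp.single_apply, hb]
      · intro h'; exact absurd hi h'
    · rw [Finset.sum_eq_zero]
      · exact Nat.zero_le _
      · intro b hb
        have : b ≠ i := fun e => hi (e ▸ hb)
        simp [Finsupp.single_apply, this]

lemma monomial_mem_AIdeal_iff (K : Type) [Field K] {n a : ℕ} (Δ : Finset (Finset (Fin n)))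
    (hcomplex : (∅ ∈ Δ ∧ ∀ σ ∈ Δ, ∀ τ, τ ⊆ σ → τ ∈ Δ)) (m : Fin n →₀ ℕ) :
    (monomial m 1 : MvPolynomial (Fin n) K) ∈ AIdeal K Δ a ↔
      m.support ∉ Δ ∨ ∃ i, a ≤ m i := by
  rw [AIdeal_eq_span, mem_ideal_span_monomial_image]
  rw [support_monomial, if_neg one_ne_zero]
  simp only [Finset.mem_singleton, forall_eq]
  constructor
  · rintro ⟨s, hs | ⟨i, rfl⟩, hle⟩
    · obtain ⟨σ, hσ, rfl⟩ := hs
      rw [indicator_le_iff] at hle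
      left
      intro hsup
      exact hσ (hcomplex.2 _ hsup _ hle)
    · right
      exact ⟨i, Finsupp.single_le_iff.mp hle⟩
  · rintro (h | ⟨i, hi⟩)
    · exact ⟨_, Or.inl ⟨m.support, h, rfl⟩, (indicator_le_iff _ _).mpr (subset_refl _)⟩
    · exact ⟨_, Or.inr ⟨i, rfl⟩, Finsupp.single_le_iff.mpr hi⟩

section Aux
variable {n : ℕ}

lemma pair_apply (i j : Fin n) (k l : ℕ) (x : Fin n) :
    (Finsupp.single i k + Finsupp.single j l) x =
      (if i = x then k else 0) + (if j = x then l else 0) := by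
  simp [Finsupp.single_apply]

lemma pair_sum {i j : Fin n} (h : i ≠ j) (k l : ℕ) :
    ∑ x, (Finsupp.single i k + Finsupp.single j l) x = k + l := by
  simp only [pair_apply, Finset.sum_add_distrib, Finset.sum_ite_eq, Finset.mem_univ, if_true]

lemma pair_support {i j : Fin n} (h : i ≠ j) {k l : ℕ} (hk : k ≠ 0) (hl : l ≠ 0) :
    (Finsupp.single i k + Finsupp.single j l).support = {i, j} := by
  ext x
  simp only [Finsupp.mem_support_iff, Finsupp.add_apply, Finsupp.single_apply,
    Finset.mem_insert, Finset.mem_singleton]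
  split_ifs with h1 h2 h2 <;> simp_all [eq_comm]

lemma sum_univ_eq_degree (m : Fin n →₀ ℕ) : ∑ i, m i = m.degree := by
  rw [Finsupp.degree]
  exact (Finset.sum_subset (Finset.subset_univ _)
    (fun x _ hx => Finsupp.notMem_support_iff.mp hx)).symm

lemma min'_pair {i j : Fin n} (h : i < j) :
    ({i, j} : Finset (Fin n)).min' ⟨i, by simp⟩ = i := by
  apply le_antisymm (Finset.min'_le _ _ (by simp))
  apply Finset.le_min'
  intro y hy
  rcases Finset.mem_insert.mp hy with rfl | hy
  · exact le_refl _
  · rw [Finset.mem_singleton] at hy; omega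

lemma max'_pair {i j : Fin n} (h : i < j) :
    ({i, j} : Finset (Fin n)).max' ⟨i, by simp⟩ = j := by
  apply le_antisymm
  · apply Finset.max'_le
    intro y hy
    rcases Finset.mem_insert.mp hy with rfl | hy
    · omega
    · rw [Finset.mem_singleton] at hy; omega
  · exact Finset.le_max' _ _ (by simp)

end Aux

lemma classify {n a d : ℕ} (Δ : Finset (Finset (Fin n)))
    (hcard : ∀ σ ∈ Δ, σ.card ≤ 2) (ha : 2 ≤ a) (had : a ≤ d)
    (m : Fin n →₀ ℕ) (hd : ∑ i, m i = d) (hs : m.support ∈ Δ) (hm : ∀ i, m i < a) :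
    ∃ i j : Fin n, i < j ∧ m.support = {i, j} ∧
      m = Finsupp.single i (m i) + Finsupp.single j (m j) ∧
      1 ≤ m i ∧ 1 ≤ m j ∧ m i + m j = d := by
  have hsum : ∑ i ∈ m.support, m i = d := by
    rw [← hd]
    exact (Finset.sum_subset (Finset.subset_univ _)
      (fun x _ hx => Finsupp.notMem_support_iff.mp hx))
  have hc2 : m.support.card = 2 := by
    have hle := hcard _ hs
    interval_cases h : m.support.card
    · rw [Finset.card_eq_zero] at h
      rw [h] at hsum; simp at hsum; omega
    · rw [Finset.card_eq_one] at h
      obtain ⟨i, hi⟩ := h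
      rw [hi, Finset.sum_singleton] at hsum
      have := hm i; omega
    · rfl
  rw [Finset.card_eq_two] at hc2
  obtain ⟨i, j, hij, hsupp⟩ := hc2
  -- wlog i < j
  obtain ⟨i, j, hij, hsupp⟩ : ∃ i j : Fin n, i < j ∧ m.support = {i, j} := by
    rcases lt_or_gt_of_ne hij with h | h
    · exact ⟨i, j, h, hsupp⟩
    · exact ⟨j, i, h, by rw [hsupp, Finset.pair_comm]⟩
  have hmi : 1 ≤ m i := by
    have : i ∈ m.support := by rw [hsupp]; simp
    rw [Finsupp.mem_support_iff] at this; omega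
  have hmj : 1 ≤ m j := by
    have : j ∈ m.support := by rw [hsupp]; simp
    rw [Finsupp.mem_support_iff] at this; omega
  have hne : i ≠ j := ne_of_lt hij
  have heq : m = Finsupp.single i (m i) + Finsupp.single j (m j) := by
    ext x
    rw [pair_apply]
    by_cases hxi : i = x
    · subst hxi; simp [hne.symm]
    · by_cases hxj : j = x
      · subst hxj; simp [hxi]
      · have : x ∉ m.support := by rw [hsupp]; simp [Ne.symm hxi, Ne.symm hxj]
        rw [Finsupp.notMem_support_iff] at this
        simp [hxi, hxj, this]
  refine ⟨i, j, hij, hsupp, heq, hmi, hmj, ?_⟩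
  rw [hsupp, Finset.sum_pair hne] at hsum
  exact hsum


lemma ridge_facts {n : ℕ} {Δ : Finset (Finset (Fin n))} {σ : Finset (Fin n)}
    (h : σ ∈ ridgesF Δ 2) : σ ∈ Δ ∧ σ.card = 2 := Finset.mem_filter.mp h

lemma ridge_nonempty {n : ℕ} {Δ : Finset (Finset (Fin n))} {σ : Finset (Fin n)}
    (h : σ ∈ ridgesF Δ 2) : σ.Nonempty :=
  Finset.card_pos.mp (by rw [(ridge_facts h).2]; omega)

lemma ridge_eq_pair {n : ℕ} {Δ : Finset (Finset (Fin n))} {σ : Finset (Fin n)}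
    (h : σ ∈ ridgesF Δ 2) :
    σ.min' (ridge_nonempty h) < σ.max' (ridge_nonempty h) ∧
    σ = {σ.min' (ridge_nonempty h), σ.max' (ridge_nonempty h)} := by
  have hc := (ridge_facts h).2
  have hlt : σ.min' (ridge_nonempty h) < σ.max' (ridge_nonempty h) :=
    Finset.min'_lt_max'_of_card σ (by omega)
  refine ⟨hlt, ?_⟩
  apply (Finset.eq_of_subset_of_card_le ?_ ?_).symm
  · intro x hx
    rcases Finset.mem_insert.mp hx with rfl | hx
    · exact Finset.min'_mem _ _
    · rw [Finset.mem_singleton] at hx; subst hx; exact Finset.max'_mem _ _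
  · rw [hc, Finset.card_insert_of_notMem (by simp [ne_of_lt hlt]), Finset.card_singleton]

lemma pathEquiv (K : Type) [Field K] {n : ℕ} (Δ : Finset (Finset (Fin n)))
    (hcomplex : ∅ ∈ Δ ∧ ∀ σ ∈ Δ, ∀ τ, τ ⊆ σ → τ ∈ Δ)
    (hcard : ∀ σ ∈ Δ, σ.card ≤ 2) (a b d : ℕ) (hb : 1 ≤ b) (hba : 2 ≤ a) (hd : d + 1 = a + b) :
    ∃ e : {σ // σ ∈ ridgesF Δ 2} × Fin (a - b) ≃
        {m : Fin n →₀ ℕ // (∑ i, m i) = d ∧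
          (monomial m 1 : MvPolynomial (Fin n) K) ∉ AIdeal K Δ a},
      ∀ p, ∃ i j : Fin n, i < j ∧ p.1.1 = {i, j} ∧
        (e p).1 = Finsupp.single i ((p.2 : ℕ) + b) + Finsupp.single j (a - 1 - (p.2 : ℕ)) := by
  classical
  have ha : 2 ≤ a := by omega
  -- the forward map
  have toFun_mem : ∀ p : {σ // σ ∈ ridgesF Δ 2} × Fin (a - b),
      (∑ i, (Finsupp.single (p.1.1.min' (ridge_nonempty p.1.2)) ((p.2 : ℕ) + b) +
        Finsupp.single (p.1.1.max' (ridge_nonempty p.1.2)) (a - 1 - (p.2 : ℕ))) i) = d ∧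
      (monomial (Finsupp.single (p.1.1.min' (ridge_nonempty p.1.2)) ((p.2 : ℕ) + b) +
        Finsupp.single (p.1.1.max' (ridge_nonempty p.1.2)) (a - 1 - (p.2 : ℕ))) 1 :
          MvPolynomial (Fin n) K) ∉ AIdeal K Δ a := by
    rintro ⟨⟨σ, hσ⟩, t⟩
    obtain ⟨hlt, hpair⟩ := ridge_eq_pair hσ
    set i := σ.min' (ridge_nonempty hσ)
    set j := σ.max' (ridge_nonempty hσ)
    have hne : i ≠ j := ne_of_lt hlt
    have ht : (t : ℕ) < a - b := t.isLt
    constructor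
    · rw [pair_sum hne]; omega
    · rw [monomial_mem_AIdeal_iff K Δ hcomplex]
      push_neg
      constructor
      · rw [pair_support hne (by omega) (by omega), ← hpair]
        exact (ridge_facts hσ).1
      · intro x
        rw [pair_apply]
        split_ifs <;> omega
  -- the inverse map
  have invFun_mem : ∀ m : Fin n →₀ ℕ, (∑ i, m i) = d →
      (monomial m 1 : MvPolynomial (Fin n) K) ∉ AIdeal K Δ a →
      ∃ i j : Fin n, i < j ∧ m.support = {i, j} ∧
        m = Finsupp.single i (m i) + Finsupp.single j (m j) ∧
        b ≤ m i ∧ m i ≤ a - 1 ∧ m j = a - 1 - (m i - b) ∧ m.support ∈ ridgesF Δ 2 := by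
    intro m hsum hmem
    rw [monomial_mem_AIdeal_iff K Δ hcomplex] at hmem
    push_neg at hmem
    obtain ⟨hsupp, hlt⟩ := hmem
    obtain ⟨i, j, hij, hsuppeq, heq, hmi, hmj, hsum2⟩ :=
      classify Δ hcard ha (by omega) m hsum hsupp (fun i => hlt i)
    refine ⟨i, j, hij, hsuppeq, heq, ?_, ?_, ?_, ?_⟩
    · have := hlt j; omega
    · have := hlt i; omega
    · have := hlt i; have := hlt j; omega
    · rw [ridgesF, Finset.mem_filter]
      refine ⟨hsupp, ?_⟩
      rw [hsuppeq, Finset.card_insert_of_notMem (by simp [ne_of_lt hij]),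
        Finset.card_singleton]
  have pair_min : ∀ (σ : Finset (Fin n)) (hne : σ.Nonempty) (i j : Fin n),
      i < j → σ = {i, j} → σ.min' hne = i ∧ σ.max' hne = j := by
    rintro σ hne i j hij rfl
    exact ⟨min'_pair hij, max'_pair hij⟩
  set f : {σ // σ ∈ ridgesF Δ 2} × Fin (a - b) →
      {m : Fin n →₀ ℕ // (∑ i, m i) = d ∧
        (monomial m 1 : MvPolynomial (Fin n) K) ∉ AIdeal K Δ a} :=
    fun p => ⟨_, toFun_mem p⟩ with hf
  have hbij : Function.Bijective f := by
    constructor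
    · rintro ⟨⟨σ, hσ⟩, t⟩ ⟨⟨σ', hσ'⟩, t'⟩ h
      rw [Subtype.ext_iff] at h
      simp only [hf] at h
      obtain ⟨hlt, hpair⟩ := ridge_eq_pair hσ
      obtain ⟨hlt', hpair'⟩ := ridge_eq_pair hσ'
      set i := σ.min' (ridge_nonempty hσ)
      set j := σ.max' (ridge_nonempty hσ)
      set i' := σ'.min' (ridge_nonempty hσ')
      set j' := σ'.max' (ridge_nonempty hσ')
      have ht : (t : ℕ) < a - b := t.isLt
      have ht' : (t' : ℕ) < a - b := t'.isLt
      have hsupp : σ = σ' := by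
        rw [hpair, hpair', ← pair_support (ne_of_lt hlt) (k := (t : ℕ) + b)
          (l := a - 1 - (t : ℕ)) (by omega) (by omega),
          ← pair_support (ne_of_lt hlt') (k := (t' : ℕ) + b)
          (l := a - 1 - (t' : ℕ)) (by omega) (by omega), h]
      obtain ⟨hii, hjj⟩ : i = i' ∧ j = j' := by
        have e1 := pair_min σ' (ridge_nonempty hσ') i j hlt (hsupp.symm.trans hpair)
        have e2 := pair_min σ' (ridge_nonempty hσ') i' j' hlt' hpair'
        exact ⟨e1.1.symm.trans e2.1, e1.2.symm.trans e2.2⟩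
      have hval := congrArg (fun g : Fin n →₀ ℕ => g i) h
      simp only [pair_apply] at hval
      rw [if_pos trivial, if_neg (ne_of_gt hlt), if_pos hii.symm,
        if_neg (show j' ≠ i by rw [← hjj]; exact ne_of_gt hlt)] at hval
      have : (t : ℕ) = (t' : ℕ) := by omega
      exact Prod.ext (Subtype.ext hsupp) (Fin.ext this)
    · rintro ⟨m, hsum, hmem⟩
      obtain ⟨i, j, hij, hsuppeq, heq, hbi, hia, hj, hr⟩ := invFun_mem m hsum hmem
      refine ⟨⟨⟨m.support, hr⟩, ⟨m i - b, by omega⟩⟩, ?_⟩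
      apply Subtype.ext
      simp only [hf]
      obtain ⟨h1, h2⟩ := pair_min m.support (ridge_nonempty hr) i j hij hsuppeq
      rw [h1, h2, Nat.sub_add_cancel hbi, ← hj]
      exact heq.symm
  refine ⟨Equiv.ofBijective f hbij, ?_⟩
  rintro ⟨⟨σ, hσ⟩, t⟩
  obtain ⟨hlt, hpair⟩ := ridge_eq_pair hσ
  exact ⟨_, _, hlt, hpair, rfl⟩


lemma pair_add_single_left {n : ℕ} {i j : Fin n} (hne : i ≠ j) (k l : ℕ) :
    (Finsupp.single i k + Finsupp.single j l) + Finsupp.single i 1 =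
      Finsupp.single i (k + 1) + Finsupp.single j l := by
  ext x
  simp only [Finsupp.add_apply, Finsupp.single_apply]
  split_ifs <;> omega

lemma pair_add_single_right {n : ℕ} {i j : Fin n} (hne : i ≠ j) (k l : ℕ) :
    (Finsupp.single i k + Finsupp.single j l) + Finsupp.single j 1 =
      Finsupp.single i k + Finsupp.single j (l + 1) := by
  ext x
  simp only [Finsupp.add_apply, Finsupp.single_apply]
  split_ifs <;> omega

lemma telescope (K : Type) [Field K] {n a : ℕ} (Δ : Finset (Finset (Fin n)))
    (hcomplex : ∅ ∈ Δ ∧ ∀ σ ∈ Δ, ∀ τ, τ ⊆ σ → τ ∈ Δ)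
    (hcard : ∀ σ ∈ Δ, σ.card ≤ 2) {i j : Fin n} (hne : i ≠ j)
    (m : Fin n →₀ ℕ) (hsupp : m.support = {i, j}) :
    Ideal.Quotient.mk (AIdeal K Δ a) ((∑ x, X x) * monomial m 1) =
      Ideal.Quotient.mk (AIdeal K Δ a) (monomial (m + Finsupp.single i 1) 1) +
      Ideal.Quotient.mk (AIdeal K Δ a) (monomial (m + Finsupp.single j 1) 1) := by
  classical
  have hX : ∀ x : Fin n, (X x : MvPolynomial (Fin n) K) * monomial m 1 =
      monomial (m + Finsupp.single x 1) 1 := fun x => by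
    rw [X, monomial_mul, one_mul, add_comm]
  rw [Finset.sum_mul]
  simp_rw [hX]
  rw [map_sum]
  rw [← Finset.sum_subset (Finset.subset_univ ({i, j} : Finset (Fin n)))]
  · rw [Finset.sum_pair hne]
  · intro x _ hx
    rw [Ideal.Quotient.eq_zero_iff_mem, monomial_mem_AIdeal_iff K Δ hcomplex]
    left
    have hsx : (m + Finsupp.single x 1).support = m.support ∪ {x} := by
      rw [Finsupp.support_add_eq, Finsupp.support_single_ne_zero x one_ne_zero]
      rw [Finsupp.support_single_ne_zero x one_ne_zero, hsupp]
      rw [Finset.disjoint_singleton_right]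
      exact hx
    intro hmem
    have hc := hcard _ hmem
    rw [hsx, hsupp] at hc
    rw [Finset.card_union_of_disjoint (by simpa [Finset.disjoint_singleton_right] using hx),
      Finset.card_insert_of_notMem (by simp [hne]), Finset.card_singleton,
      Finset.card_singleton] at hc
    omega

lemma surj_part (K : Type) [Field K] {n a : ℕ} (Δ : Finset (Finset (Fin n)))
    (hcomplex : ∅ ∈ Δ ∧ ∀ σ ∈ Δ, ∀ τ, τ ⊆ σ → τ ∈ Δ)
    (hcard : ∀ σ ∈ Δ, σ.card ≤ 2) (ha : 1 < a) :
    ∀ y ∈ quotComponent K (AIdeal K Δ a) (a + 1),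
      ∃ x ∈ quotComponent K (AIdeal K Δ a) a,
        Ideal.Quotient.mk (AIdeal K Δ a) (∑ i, X i) * x = y := by
  classical
  set J := AIdeal K Δ a with hJ
  set mk := Ideal.Quotient.mk J with hmk
  set L : MvPolynomial (Fin n) K := ∑ i, X i with hL
  set N : Submodule K (MvPolynomial (Fin n) K ⧸ J) :=
    Submodule.map (LinearMap.mulLeft K (mk L)) (quotComponent K J a) with hN
  -- membership of degree-a monomials in the component
  have hcomp : ∀ m : Fin n →₀ ℕ, (∑ i, m i) = a → mk (monomial m 1) ∈ quotComponent K J a := by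
    intro m hm
    exact ⟨monomial m 1, isHomogeneous_monomial 1 (by rw [← sum_univ_eq_degree, hm]),
      by simp [Ideal.Quotient.mkₐ_eq_mk, hmk]⟩
  -- the telescoping induction
  have claim0 : ∀ i j : Fin n, i < j → ({i, j} : Finset (Fin n)) ∈ Δ →
      ∀ l : ℕ, 1 ≤ l → l ≤ a - 1 →
      mk (monomial (Finsupp.single i (a - l) + Finsupp.single j (l + 1)) 1) ∈ N := by
    intro i j hij hedge
    have hne : i ≠ j := ne_of_lt hij
    have key : ∀ l : ℕ, 1 ≤ l → l ≤ a - 1 →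
        LinearMap.mulLeft K (mk L) (mk (monomial (Finsupp.single i (a - l) +
            Finsupp.single j l) 1)) =
          mk (monomial (Finsupp.single i (a - l + 1) + Finsupp.single j l) 1) +
          mk (monomial (Finsupp.single i (a - l) + Finsupp.single j (l + 1)) 1) := by
      intro l hl1 hl2
      have hmul : LinearMap.mulLeft K (mk L) (mk (monomial (Finsupp.single i (a - l) +
          Finsupp.single j l) 1)) = mk (L * monomial (Finsupp.single i (a - l) +
          Finsupp.single j l) 1) := by
        rw [LinearMap.mulLeft_apply, ← map_mul]
      rw [hmul, telescope K Δ hcomplex hcard hne _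
        (pair_support hne (by omega) (by omega)),
        pair_add_single_left hne, pair_add_single_right hne]
    intro l hl1
    induction l, hl1 using Nat.le_induction with
    | base =>
        intro hla
        have hk := key 1 le_rfl hla
        have hz : mk (monomial (Finsupp.single i (a - 1 + 1) + Finsupp.single j 1) 1) = 0 := by
          rw [hmk, Ideal.Quotient.eq_zero_iff_mem, hJ, monomial_mem_AIdeal_iff K Δ hcomplex]
          right
          refine ⟨i, ?_⟩
          rw [pair_apply, if_pos rfl, if_neg hne.symm]
          omega
        have hmem : LinearMap.mulLeft K (mk L) (mk (monomial (Finsupp.single i (a - 1) +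
            Finsupp.single j 1) 1)) ∈ N :=
          Submodule.mem_map_of_mem (hcomp _ (by rw [pair_sum hne]; omega))
        rw [hk, hz, zero_add] at hmem
        exact hmem
    | succ l hl ih =>
        intro hla
        have hla' : l ≤ a - 1 := by omega
        have hk := key (l + 1) (by omega) hla
        have hmem : LinearMap.mulLeft K (mk L) (mk (monomial (Finsupp.single i (a - (l + 1)) +
            Finsupp.single j (l + 1)) 1)) ∈ N :=
          Submodule.mem_map_of_mem (hcomp _ (by rw [pair_sum hne]; omega))
        rw [hk] at hmem
        have hfirst : mk (monomial (Finsupp.single i (a - (l + 1) + 1) +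
            Finsupp.single j (l + 1)) 1) ∈ N := by
          have : a - (l + 1) + 1 = a - l := by omega
          rw [this]
          exact ih hla'
        have := Submodule.sub_mem N hmem hfirst
        simpa using this
  -- every degree-(a+1) monomial image lies in N
  have claim1 : ∀ m : Fin n →₀ ℕ, (∑ i, m i) = a + 1 → mk (monomial m 1) ∈ N := by
    intro m hm
    by_cases hmem : (monomial m 1 : MvPolynomial (Fin n) K) ∈ J
    · rw [hmk, show Ideal.Quotient.mk J (monomial m 1) = 0 from
        Ideal.Quotient.eq_zero_iff_mem.mpr hmem]
      exact Submodule.zero_mem N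
    · rw [hJ, monomial_mem_AIdeal_iff K Δ hcomplex] at hmem
      push_neg at hmem
      obtain ⟨hsupp, hlt⟩ := hmem
      obtain ⟨i, j, hij, hsuppeq, heq, hmi, hmj, hsum2⟩ :=
        classify Δ hcard (by omega) (by omega) m hm hsupp hlt
      have hedge : ({i, j} : Finset (Fin n)) ∈ Δ := hsuppeq ▸ hsupp
      have hmj2 : 2 ≤ m j := by have := hlt i; omega
      have := claim0 i j hij hedge (m j - 1) (by omega) (by have := hlt j; omega)
      have heq2 : Finsupp.single i (a - (m j - 1)) + Finsupp.single j ((m j - 1) + 1) =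
          Finsupp.single i (m i) + Finsupp.single j (m j) := by
        have h1 : a - (m j - 1) = m i := by have := hlt i; have := hlt j; omega
        have h2 : m j - 1 + 1 = m j := by omega
        rw [h1, h2]
      rw [heq2, ← heq] at this
      exact this
  -- conclude
  intro y hy
  obtain ⟨f, hf, rfl⟩ := hy
  have hmk_f : (Ideal.Quotient.mkₐ K J).toLinearMap f = mk f := by
    simp [Ideal.Quotient.mkₐ_eq_mk, hmk]
  rw [hmk_f]
  have hfN : mk f ∈ N := by
    have hsplit : mk f = ∑ v ∈ f.support, mk (monomial v (coeff v f)) := by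
      rw [← map_sum, support_sum_monomial_coeff]
    rw [hsplit]
    apply Submodule.sum_mem
    intro v hv
    have hdeg : (∑ i, v i) = a + 1 := by
      rw [sum_univ_eq_degree]
      by_contra hne2
      exact MvPolynomial.mem_support_iff.mp hv
        ((show MvPolynomial.IsHomogeneous f (a + 1) from hf).coeff_eq_zero hne2)
    have hthis : (monomial v (coeff v f) : MvPolynomial (Fin n) K) =
        coeff v f • monomial v 1 := by
      rw [smul_monomial, smul_eq_mul, mul_one]
    have hsm : mk (monomial v (coeff v f)) = coeff v f • mk (monomial v 1) := by
      have h2 := map_smul (Ideal.Quotient.mkₐ K J).toLinearMap (coeff v f) (monomial v 1)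
      simp only [AlgHom.toLinearMap_apply, Ideal.Quotient.mkₐ_eq_mk] at h2
      rw [hthis, h2]
    rw [hsm]
    exact Submodule.smul_mem N _ (claim1 v hdeg)
  obtain ⟨x, hx, hxy⟩ := hfN
  exact ⟨x, hx, hxy⟩

lemma pair_min_max {n : ℕ} {σ : Finset (Fin n)} (hne : σ.Nonempty) {i j : Fin n}
    (hij : i < j) (h : σ = {i, j}) : σ.min' hne = i ∧ σ.max' hne = j := by
  subst h; exact ⟨min'_pair hij, max'_pair hij⟩

lemma pair_eq_pair {n : ℕ} {i j i' j' : Fin n} (hij : i < j) (hij' : i' < j')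
    (h : ({i, j} : Finset (Fin n)) = {i', j'}) : i = i' ∧ j = j' := by
  have hne : ({i, j} : Finset (Fin n)).Nonempty := ⟨i, by simp⟩
  have e1 := pair_min_max hne hij rfl
  have e2 := pair_min_max hne hij' h
  exact ⟨e1.1.symm.trans e2.1, e1.2.symm.trans e2.2⟩

/-- **`×L : A_Δ(a)_a → A_Δ(a)_{a+1}` is an incidence matrix of disjoint paths
(Proposition `p:matrixsubdivision`).**
For a graph `Δ` with `e` edges and `a > 1`, the matrix of
`×L : A_Δ(a)_a → A_Δ(a)_{a+1}` in the monomial bases is the unsigned incidence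
matrix of a disjoint union of `e` paths, each with `a-1` vertices and `a-2`
edges (one per edge of `Δ`): there are bijections indexing the degree-`a`
monomials outside `J` by pairs (edge, vertex of a path on `a-1` vertices) and
the degree-`(a+1)` monomials outside `J` by pairs (edge, edge of that path),
under which divisibility is exactly path incidence.  In particular the map
`×L : A_Δ(a)_a → A_Δ(a)_{a+1}` is surjective. -/
theorem graph_mult_matrix_is_path_incidence (K : Type) [Field K] [CharZero K]
    {n a : ℕ} (Δ : Finset (Finset (Fin n)))
    (hcomplex : IsComplex Δ) (hcard : ∀ σ ∈ Δ, σ.card ≤ 2)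
    (hverts : ∀ i : Fin n, ({i} : Finset (Fin n)) ∈ Δ) (ha : 1 < a) :
    (∃ (α : {σ // σ ∈ ridgesF Δ 2} × Fin (a - 1) ≃
          {m : Fin n →₀ ℕ // (∑ i, m i) = a ∧
            (monomial m 1 : MvPolynomial (Fin n) K) ∉ AIdeal K Δ a})
       (β : {σ // σ ∈ ridgesF Δ 2} × Fin (a - 2) ≃
          {m : Fin n →₀ ℕ // (∑ i, m i) = a + 1 ∧
            (monomial m 1 : MvPolynomial (Fin n) K) ∉ AIdeal K Δ a}),
       ∀ p q, (α p).1 ≤ (β q).1 ↔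
         p.1 = q.1 ∧ ((p.2 : ℕ) = (q.2 : ℕ) ∨ (p.2 : ℕ) = (q.2 : ℕ) + 1)) ∧
    (∀ y ∈ quotComponent K (AIdeal K Δ a) (a + 1),
       ∃ x ∈ quotComponent K (AIdeal K Δ a) a,
         Ideal.Quotient.mk (AIdeal K Δ a) (∑ i, X i) * x = y) := by
  constructor
  · obtain ⟨α, hα⟩ := pathEquiv K Δ ⟨hcomplex.1, hcomplex.2⟩ hcard a 1 a le_rfl (by omega) (by omega)
    obtain ⟨β, hβ⟩ := pathEquiv K Δ ⟨hcomplex.1, hcomplex.2⟩ hcard a 2 (a + 1) (by omega) (by omega) (by omega)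
    refine ⟨α, β, ?_⟩
    intro p q
    obtain ⟨i, j, hij, hp, hap⟩ := hα p
    obtain ⟨i', j', hij', hq, haq⟩ := hβ q
    rw [hap, haq]
    have ht : (p.2 : ℕ) < a - 1 := p.2.isLt
    have hs : (q.2 : ℕ) < a - 2 := q.2.isLt
    constructor
    · intro h
      have hsupR : (Finsupp.single i' ((q.2 : ℕ) + 2) +
          Finsupp.single j' (a - 1 - (q.2 : ℕ))).support = {i', j'} :=
        pair_support (ne_of_lt hij') (by omega) (by omega)
      have hsub : ({i, j} : Finset (Fin n)) ⊆ {i', j'} := by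
        intro x hx
        rw [← hsupR, Finsupp.mem_support_iff]
        have h1 := Finsupp.le_def.mp h x
        rw [pair_apply] at h1
        rcases Finset.mem_insert.mp hx with rfl | hx
        · rw [if_pos rfl, if_neg (ne_of_gt hij)] at h1
          omega
        · rw [Finset.mem_singleton] at hx
          subst hx
          rw [if_neg (ne_of_lt hij), if_pos rfl] at h1
          omega
      have c1 : ({i, j} : Finset (Fin n)).card = 2 := by
        rw [Finset.card_insert_of_notMem (by simp [ne_of_lt hij]), Finset.card_singleton]
      have c2 : ({i', j'} : Finset (Fin n)).card = 2 := by
        rw [Finset.card_insert_of_notMem (by simp [ne_of_lt hij']), Finset.card_singleton]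
      have hEq : ({i, j} : Finset (Fin n)) = {i', j'} :=
        Finset.eq_of_subset_of_card_le hsub (by rw [c1, c2])
      obtain ⟨hii, hjj⟩ := pair_eq_pair hij hij' hEq
      subst hii
      subst hjj
      have h1 := Finsupp.le_def.mp h i
      rw [pair_apply, pair_apply, if_pos rfl, if_neg (ne_of_gt hij), if_pos rfl,
        if_neg (ne_of_gt hij)] at h1
      have h2 := Finsupp.le_def.mp h j
      rw [pair_apply, pair_apply, if_neg (ne_of_lt hij), if_pos rfl,
        if_neg (ne_of_lt hij), if_pos rfl] at h2
      exact ⟨Subtype.ext (hp.trans hq.symm), by omega⟩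
    · rintro ⟨hpq, hor⟩
      have hEq : ({i, j} : Finset (Fin n)) = {i', j'} :=
        hp.symm.trans ((congrArg (fun z => z.1) hpq).trans hq)
      obtain ⟨hii, hjj⟩ := pair_eq_pair hij hij' hEq
      subst hii
      subst hjj
      rw [Finsupp.le_def]
      intro x
      rw [pair_apply, pair_apply]
      by_cases hxi : i = x
      · rw [if_pos hxi, if_pos hxi,
          if_neg (show j ≠ x by rw [← hxi]; exact ne_of_gt hij),
          if_neg (show j ≠ x by rw [← hxi]; exact ne_of_gt hij)]
        omega
      · rw [if_neg hxi, if_neg hxi]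
        by_cases hxj : j = x
        · rw [if_pos hxj, if_pos hxj]
          omega
        · rw [if_neg hxj, if_neg hxj]
  · exact surj_part K Δ ⟨hcomplex.1, hcomplex.2⟩ hcard ha
end

section
/- Let K be a field of characteristic zero and let Δ be a d-dimensional pseudomanifold without boundary on vertex set [n], with d ≥ 1. Set A = A_Δ(2) = R/(I_Δ + (x_1^2,…,x_n^2)) and L = x_1 + ⋯ + x_n. Then the multiplication map ×L : A_d → A_{d+1} is not surjective if and only if the facet–ridge graph G(Δ) is bipartite; in particular, ×L : A_d → A_{d+1} fails to have full rank if and only if G(Δ) is bipartite. -/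
open MvPolynomial
open scoped Classical

/-- The geometric realization of `Δ` inside `ℝ^n`. -/
def geomReal {n : ℕ} (Δ : Finset (Finset (Fin n))) : Set (Fin n → ℝ) :=
  {p | (∀ i, 0 ≤ p i) ∧ (∑ i, p i = 1) ∧ (Finset.univ.filter fun i => p i ≠ 0) ∈ Δ}

/-- `Δ` is a simplicial `d`-sphere: its geometric realization is homeomorphic
to the unit sphere `S^d ⊆ ℝ^{d+1}`. -/
def IsSphere {n : ℕ} (Δ : Finset (Finset (Fin n))) (d : ℕ) : Prop :=
  Nonempty (geomReal Δ ≃ₜ Metric.sphere (0 : EuclideanSpace ℝ (Fin (d + 1))) 1)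

/-- `ρ` is a proper `(d+1)`-coloring of the `1`-skeleton of `Δ`. -/
def IsProperColoring {n : ℕ} (Δ : Finset (Finset (Fin n))) (d : ℕ)
    (ρ : Fin n → Fin (d + 1)) : Prop :=
  ∀ u v : Fin n, u ≠ v → ({u, v} : Finset (Fin n)) ∈ Δ → ρ u ≠ ρ v

/-- A `d`-dimensional complex is balanced if its `1`-skeleton is `(d+1)`-colorable. -/
def IsBalanced {n : ℕ} (Δ : Finset (Finset (Fin n))) (d : ℕ) : Prop :=
  ∃ ρ : Fin n → Fin (d + 1), IsProperColoring Δ d ρ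

/-- The colored system of parameters associated to a coloring `ρ`:
`θ_i = ∑_{ρ(v) = i} x_v`. -/
noncomputable def coloredSOP (K : Type) [Field K] {n d : ℕ} (ρ : Fin n → Fin (d + 1)) :
    Fin (d + 1) → MvPolynomial (Fin n) K :=
  fun i => ∑ v ∈ Finset.univ.filter fun v => ρ v = i, X v

/-- The facet–ridge graph of a pure `d`-dimensional complex `Δ`: vertices are
facets, two facets being adjacent iff their intersection is a ridge. -/
def facetRidgeGraph {n : ℕ} (Δ : Finset (Finset (Fin n))) (d : ℕ) :
    SimpleGraph {F : Finset (Fin n) // IsFacet Δ F} where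
  Adj F G := F ≠ G ∧ (F.1 ∩ G.1).card = d
  symm := by
    refine ⟨?_⟩
    rintro F G ⟨h1, h2⟩
    exact ⟨h1.symm, by rwa [Finset.inter_comm]⟩
  loopless := by refine ⟨?_⟩; rintro F ⟨h, _⟩; exact h rfl
/-- `Δ` is strongly connected: any two facets are joined by a sequence of
facets in which consecutive facets intersect in a ridge. -/
def StronglyConnected {n : ℕ} (Δ : Finset (Finset (Fin n))) (d : ℕ) : Prop :=
  ∀ F G : Finset (Fin n), IsFacet Δ F → IsFacet Δ G →
    Relation.ReflTransGen
      (fun A B => IsFacet Δ A ∧ IsFacet Δ B ∧ (A ∩ B).card = d) F G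

/-- `Δ` is a `d`-dimensional pseudomanifold without boundary: it is pure and
strongly connected, and every ridge is contained in exactly two facets. -/
def IsPseudomanifoldNB {n : ℕ} (Δ : Finset (Finset (Fin n))) (d : ℕ) : Prop :=
  IsPure Δ d ∧ StronglyConnected Δ d ∧
    ∀ σ ∈ Δ, σ.card = d → ((facetsF Δ).filter fun F => σ ⊆ F).card = 2
noncomputable def eF {n : ℕ} (σ : Finset (Fin n)) : Fin n →₀ ℕ := ∑ i ∈ σ, Finsupp.single i 1

lemma eF_apply {n : ℕ} (σ : Finset (Fin n)) (j : Fin n) :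
    eF σ j = if j ∈ σ then 1 else 0 := by
  rw [eF, Finset.sum_apply']
  by_cases h : j ∈ σ
  · rw [Finset.sum_eq_single j (fun i _ hij => by simp [Finsupp.single_apply, hij]) (by simp [h])]
    simp [h]
  · rw [Finset.sum_eq_zero, if_neg h]
    intro i hi
    rw [Finsupp.single_apply, if_neg (fun hh : i = j => h (hh ▸ hi))]

lemma eF_support {n : ℕ} (σ : Finset (Fin n)) : (eF σ).support = σ := by
  ext j; simp [Finsupp.mem_support_iff, eF_apply]

lemma eF_inj {n : ℕ} {σ τ : Finset (Fin n)} (h : eF σ = eF τ) : σ = τ := by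
  rw [← eF_support σ, ← eF_support τ, h]

lemma eF_le_iff {n : ℕ} {σ τ : Finset (Fin n)} : eF σ ≤ eF τ ↔ σ ⊆ τ := by
  rw [Finsupp.le_def]
  constructor
  · intro h i hi
    have := h i
    rw [eF_apply, eF_apply, if_pos hi] at this
    by_contra hit
    rw [if_neg hit] at this; omega
  · intro h i
    rw [eF_apply, eF_apply]
    split_ifs with h1 h2 <;> first | rfl | omega | exact absurd (h h1) h2

lemma eF_degree {n : ℕ} (σ : Finset (Fin n)) : (eF σ).degree = σ.card := by
  rw [Finsupp.degree_apply, eF_support]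
  rw [Finset.card_eq_sum_ones]
  exact Finset.sum_congr rfl fun i hi => by rw [eF_apply, if_pos hi]

lemma eF_erase {n : ℕ} {σ : Finset (Fin n)} {i : Fin n} (hi : i ∈ σ) :
    eF σ = Finsupp.single i 1 + eF (σ.erase i) := by
  rw [eF, eF, ← Finset.add_sum_erase _ _ hi]

lemma eF_insert {n : ℕ} {σ : Finset (Fin n)} {i : Fin n} (hi : i ∉ σ) :
    eF (insert i σ) = Finsupp.single i 1 + eF σ := by
  rw [eF, eF, Finset.sum_insert hi]

lemma eF_sub_single {n : ℕ} {σ : Finset (Fin n)} {i : Fin n} (hi : i ∈ σ) :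
    eF σ - Finsupp.single i 1 = eF (σ.erase i) := by
  rw [eF_erase hi, add_tsub_cancel_left]


lemma prod_X_eq_monomial {K : Type} [Field K] {n : ℕ} (σ : Finset (Fin n)) :
    (∏ i ∈ σ, X i : MvPolynomial (Fin n) K) = monomial (eF σ) 1 := by
  induction σ using Finset.induction with
  | empty => simp [eF]
  | insert _ _ h ih =>
    rw [Finset.prod_insert h, ih, X, monomial_mul, one_mul, eF_insert h]

/-- coefficient extraction at a face exponent kills the ideal -/
lemma coeff_face_vanish {K : Type} [Field K] {n : ℕ} {Δ : Finset (Finset (Fin n))}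
    (hcomplex : IsComplex Δ) {p : MvPolynomial (Fin n) K} (hp : p ∈ AIdeal K Δ 2)
    {τ : Finset (Fin n)} (hτ : τ ∈ Δ) : coeff (eF τ) p = 0 := by
  classical
  set M : Ideal (MvPolynomial (Fin n) K) :=
    { carrier := {q | ∀ (r : MvPolynomial (Fin n) K) (τ' : Finset (Fin n)), τ' ∈ Δ →
        coeff (eF τ') (r * q) = 0},
      add_mem' := by
        intro a b ha hb r τ' hτ'
        rw [mul_add, coeff_add, ha r τ' hτ', hb r τ' hτ', add_zero],
      zero_mem' := by intro r τ' hτ'; simp,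
      smul_mem' := by
        intro c q hq r τ' hτ'
        rw [smul_eq_mul, ← mul_assoc]
        exact hq (r * c) τ' hτ' } with hM
  have hgen : AIdeal K Δ 2 ≤ M := by
    rw [AIdeal, SRIdeal, powersIdeal, Submodule.add_eq_sup, ← Ideal.span_union]
    rw [Ideal.span_le]
    rintro q (⟨σ, hσ, rfl⟩ | ⟨i, rfl⟩)
    · intro r τ' hτ'
      rw [prod_X_eq_monomial, coeff_mul_monomial', if_neg]
      intro hle
      exact hσ (hcomplex.2 τ' hτ' σ (eF_le_iff.mp hle))
    · intro r τ' hτ'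
      show coeff (eF τ') (r * X i ^ 2) = 0
      rw [pow_two, ← mul_assoc, coeff_mul_X']
      split_ifs with h
      · rw [coeff_mul_X', if_neg]
        rw [eF_support] at h
        rw [eF_sub_single h, Finsupp.mem_support_iff]
        simp [eF_apply]
      · rfl
  have := hgen hp 1 τ hτ
  rwa [one_mul] at this


section
variable {K : Type} [Field K] {n : ℕ} {Δ : Finset (Finset (Fin n))}

lemma sr_mem (hσ : σ ∉ Δ) : (monomial (eF σ) 1 : MvPolynomial (Fin n) K) ∈ AIdeal K Δ 2 := by
  rw [← prod_X_eq_monomial]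
  exact Submodule.mem_sup_left (Ideal.subset_span ⟨σ, hσ, rfl⟩)

lemma sqPow_mem (i : Fin n) (m : Fin n →₀ ℕ) (hm : 2 ≤ m i) :
    (monomial m 1 : MvPolynomial (Fin n) K) ∈ AIdeal K Δ 2 := by
  have hle : Finsupp.single i 2 ≤ m := by
    rw [Finsupp.single_le_iff]; exact hm
  have : (monomial m 1 : MvPolynomial (Fin n) K)
      = monomial (m - Finsupp.single i 2) 1 * X i ^ 2 := by
    rw [X_pow_eq_monomial, monomial_mul, one_mul, tsub_add_cancel_of_le hle]
  rw [this]
  exact Submodule.mem_sup_right (Ideal.mul_mem_left _ _ (Ideal.subset_span ⟨i, rfl⟩))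

lemma mk_monomial_mem_span (hcomplex : IsComplex Δ) (s : ℕ) (m : Fin n →₀ ℕ)
    (hdeg : m.degree = s) :
    Ideal.Quotient.mk (AIdeal K Δ 2) (monomial m 1) ∈
      Submodule.span K ((fun σ => Ideal.Quotient.mk (AIdeal K Δ 2) (monomial (eF σ) (1:K))) ''
        {σ | σ ∈ Δ ∧ σ.card = s}) := by
  by_cases hsq : ∀ i, m i ≤ 1
  · have hme : m = eF m.support := by
      ext j
      rw [eF_apply]
      split_ifs with h
      · have h1 := Finsupp.mem_support_iff.mp h
        have := hsq j; omega
      · exact Finsupp.notMem_support_iff.mp h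
    have hcard : m.support.card = s := by
      conv_rhs => rw [← hdeg, hme, eF_degree]
    by_cases hface : m.support ∈ Δ
    · refine Submodule.subset_span ⟨m.support, ⟨hface, hcard⟩, ?_⟩
      show Ideal.Quotient.mk _ (monomial (eF m.support) 1) = _
      rw [← hme]
    · rw [hme, Ideal.Quotient.eq_zero_iff_mem.mpr (sr_mem hface)]
      exact Submodule.zero_mem _
  · push_neg at hsq
    obtain ⟨i, hi⟩ := hsq
    rw [Ideal.Quotient.eq_zero_iff_mem.mpr (sqPow_mem i m hi)]
    exact Submodule.zero_mem _

lemma comp_le_span (hcomplex : IsComplex Δ) (s : ℕ) :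
    quotComponent K (AIdeal K Δ 2) s ≤
      Submodule.span K ((fun σ => Ideal.Quotient.mk (AIdeal K Δ 2) (monomial (eF σ) (1:K))) ''
        {σ | σ ∈ Δ ∧ σ.card = s}) := by
  rintro x ⟨p, hp, rfl⟩
  have hp' : p.IsHomogeneous s := hp
  have : (Ideal.Quotient.mkₐ K (AIdeal K Δ 2)).toLinearMap p
      = ∑ m ∈ p.support, coeff m p • Ideal.Quotient.mk (AIdeal K Δ 2) (monomial m 1) := by
    conv_lhs => rw [show p = ∑ m ∈ p.support, monomial m (coeff m p) from
      (support_sum_monomial_coeff p).symm]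
    rw [map_sum]
    refine Finset.sum_congr rfl fun m hm => ?_
    rw [show (monomial m (coeff m p)) = coeff m p • (monomial m 1 : MvPolynomial (Fin n) K) by
      rw [smul_monomial, smul_eq_mul, mul_one], map_smul]
    rfl
  rw [this]
  refine Submodule.sum_mem _ fun m hm => Submodule.smul_mem _ _ ?_
  refine mk_monomial_mem_span hcomplex s m ?_
  have := hp' (mem_support_iff.mp hm)
  rw [Finsupp.degree_eq_weight_one]; exact this
end


section
variable {K : Type} [Field K] {n d : ℕ} {Δ : Finset (Finset (Fin n))}

lemma mem_facetsF {F : Finset (Fin n)} : F ∈ facetsF Δ ↔ IsFacet Δ F := by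
  simp [facetsF, IsFacet, Finset.mem_filter]

lemma card_isFacet (hdim : ∀ σ ∈ Δ, σ.card ≤ d + 1) {F : Finset (Fin n)}
    (hF : F ∈ Δ) (hc : F.card = d + 1) : IsFacet Δ F := by
  refine ⟨hF, fun G hG hFG => Finset.eq_of_subset_of_card_le hFG ?_⟩
  rw [hc]; exact hdim G hG

/-- extract the two facets over a ridge -/
lemma ridge_facets (hpm : IsPseudomanifoldNB Δ d) {σ : Finset (Fin n)}
    (hσΔ : σ ∈ Δ) (hσd : σ.card = d) :
    ∃ F G : Finset (Fin n), F ≠ G ∧ ((facetsF Δ).filter fun F => σ ⊆ F) = {F, G} := by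
  obtain ⟨F, G, hne, hFG⟩ := Finset.card_eq_two.mp (hpm.2.2 σ hσΔ hσd)
  exact ⟨F, G, hne, hFG⟩

lemma unique_vertex (hpure : IsPure Δ d) {σ F : Finset (Fin n)} (hσd : σ.card = d)
    (hF : IsFacet Δ F) (hσF : σ ⊆ F) : ∃ b, b ∉ σ ∧ insert b σ = F := by
  have hcF : F.card = d + 1 := hpure F hF
  have h1 : (F \ σ).card = 1 := by rw [Finset.card_sdiff_of_subset hσF, hcF, hσd]; omega
  obtain ⟨b, hb⟩ := Finset.card_eq_one.mp h1
  have hbmem : b ∈ F \ σ := hb ▸ Finset.mem_singleton_self b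
  have hbF : b ∈ F := (Finset.mem_sdiff.mp hbmem).1
  have hbσ : b ∉ σ := (Finset.mem_sdiff.mp hbmem).2
  refine ⟨b, hbσ, Finset.eq_of_subset_of_card_le ?_ ?_⟩
  · intro x hx
    rcases Finset.mem_insert.mp hx with rfl | hx
    · exact hbF
    · exact hσF hx
  · rw [hcF, Finset.card_insert_of_notMem hbσ, hσd]

/-- The key relation: `L · x^σ ≡ x^F + x^G` for the two facets over a ridge. -/
lemma keyRel (hcomplex : IsComplex Δ) (hdim : HasDim Δ d) (hpm : IsPseudomanifoldNB Δ d)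
    {σ F G : Finset (Fin n)} (hσΔ : σ ∈ Δ) (hσd : σ.card = d) (hne : F ≠ G)
    (hFG : ((facetsF Δ).filter fun F => σ ⊆ F) = {F, G}) :
    Ideal.Quotient.mk (AIdeal K Δ 2) ((∑ i, X i) * monomial (eF σ) 1) =
      Ideal.Quotient.mk (AIdeal K Δ 2) (monomial (eF F) 1) +
      Ideal.Quotient.mk (AIdeal K Δ 2) (monomial (eF G) 1) := by
  have hFfacet : IsFacet Δ F := by
    have : F ∈ ({F, G} : Finset (Finset (Fin n))) := by simp
    rw [← hFG, Finset.mem_filter] at this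
    exact mem_facetsF.mp this.1
  have hGfacet : IsFacet Δ G := by
    have : G ∈ ({F, G} : Finset (Finset (Fin n))) := by simp
    rw [← hFG, Finset.mem_filter] at this
    exact mem_facetsF.mp this.1
  have hσF : σ ⊆ F := by
    have : F ∈ ({F, G} : Finset (Finset (Fin n))) := by simp
    rw [← hFG, Finset.mem_filter] at this; exact this.2
  have hσG : σ ⊆ G := by
    have : G ∈ ({F, G} : Finset (Finset (Fin n))) := by simp
    rw [← hFG, Finset.mem_filter] at this; exact this.2
  obtain ⟨b, hbσ, hbF⟩ := unique_vertex hpm.1 hσd hFfacet hσF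
  obtain ⟨c, hcσ, hcG⟩ := unique_vertex hpm.1 hσd hGfacet hσG
  have hbc : b ≠ c := fun h => hne (by rw [← hbF, ← hcG, h])
  set T : Finset (Fin n) := Finset.univ.filter (fun i => i ∉ σ ∧ insert i σ ∈ Δ) with hT
  have hTbc : T = {b, c} := by
    ext i
    rw [hT, Finset.mem_filter, Finset.mem_insert, Finset.mem_singleton]
    constructor
    · rintro ⟨-, hiσ, hiΔ⟩
      have hcard : (insert i σ).card = d + 1 := by
        rw [Finset.card_insert_of_notMem hiσ, hσd]
      have hfac : IsFacet Δ (insert i σ) := card_isFacet hdim.1 hiΔ hcard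
      have : insert i σ ∈ ((facetsF Δ).filter fun F => σ ⊆ F) := by
        rw [Finset.mem_filter]
        exact ⟨mem_facetsF.mpr hfac, Finset.subset_insert i σ⟩
      rw [hFG, Finset.mem_insert, Finset.mem_singleton] at this
      rcases this with h | h
      · left
        have : i ∈ F := h ▸ Finset.mem_insert_self i σ
        rw [← hbF, Finset.mem_insert] at this
        rcases this with h' | h' ; exact h'; exact absurd h' hiσ
      · right
        have : i ∈ G := h ▸ Finset.mem_insert_self i σ
        rw [← hcG, Finset.mem_insert] at this
        rcases this with h' | h' ; exact h'; exact absurd h' hiσ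
    · rintro (rfl | rfl)
      · exact ⟨Finset.mem_univ _, hbσ, hbF ▸ hFfacet.1⟩
      · exact ⟨Finset.mem_univ _, hcσ, hcG ▸ hGfacet.1⟩
  have hsum : ((∑ i, X i) * monomial (eF σ) 1 : MvPolynomial (Fin n) K)
      = ∑ i : Fin n, X i * monomial (eF σ) 1 := Finset.sum_mul _ _ _
  rw [hsum, map_sum (Ideal.Quotient.mk (AIdeal K Δ 2)) (fun i => X i * monomial (eF σ) 1) Finset.univ]
  have hvanish : ∀ i ∈ Finset.univ, i ∉ T →
      Ideal.Quotient.mk (AIdeal K Δ 2) (X i * monomial (eF σ) 1) = 0 := by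
    intro i _ hiT
    rw [hT, Finset.mem_filter] at hiT
    push_neg at hiT
    have hX : (X i * monomial (eF σ) 1 : MvPolynomial (Fin n) K)
        = monomial (Finsupp.single i 1 + eF σ) 1 := by
      rw [X, monomial_mul, one_mul]
    by_cases hiσ : i ∈ σ
    · rw [hX, Ideal.Quotient.eq_zero_iff_mem]
      refine sqPow_mem i _ ?_
      rw [Finsupp.add_apply, Finsupp.single_apply, if_pos rfl, eF_apply, if_pos hiσ]
    · have hins := hiT (Finset.mem_univ i) hiσ
      rw [hX, ← eF_insert hiσ, Ideal.Quotient.eq_zero_iff_mem]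
      exact sr_mem hins
  rw [← Finset.sum_subset (Finset.subset_univ T) hvanish, hTbc,
    Finset.sum_pair hbc]
  congr 1
  · rw [X, monomial_mul, one_mul, ← eF_insert hbσ, hbF]
  · rw [X, monomial_mul, one_mul, ← eF_insert hcσ, hcG]
end


section
variable {K : Type} [Field K] {n d : ℕ} {Δ : Finset (Finset (Fin n))}

lemma erase_reindex {M : Type*} [AddCommMonoid M] {F : Finset (Fin n)} (hF : F.card = d + 1)
    (g : Finset (Fin n) → M) :
    ∑ i ∈ F, g (F.erase i)
      = ∑ σ ∈ Finset.univ.filter (fun σ : Finset (Fin n) => σ ⊆ F ∧ σ.card = d), g σ := by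
  refine Finset.sum_bij (fun i _ => F.erase i) ?_ ?_ ?_ ?_
  · intro i hi
    rw [Finset.mem_filter]
    exact ⟨Finset.mem_univ _, Finset.erase_subset _ _,
      by rw [Finset.card_erase_of_mem hi, hF]; omega⟩
  · intro i hi j hj hij
    by_contra hne
    have h2 : i ∈ F.erase j := Finset.mem_erase.mpr ⟨hne, hi⟩
    have h3 : F.erase i = F.erase j := hij
    rw [← h3] at h2
    exact (Finset.notMem_erase i F) h2
  · intro σ hσ
    rw [Finset.mem_filter] at hσ
    obtain ⟨-, hσF, hσd⟩ := hσ
    have h1 : (F \ σ).card = 1 := by rw [Finset.card_sdiff_of_subset hσF, hF, hσd]; omega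
    obtain ⟨i, hi⟩ := Finset.card_eq_one.mp h1
    have hmem : i ∈ F \ σ := hi ▸ Finset.mem_singleton_self i
    have hiF : i ∈ F := (Finset.mem_sdiff.mp hmem).1
    have hiσ : i ∉ σ := (Finset.mem_sdiff.mp hmem).2
    refine ⟨i, hiF, ?_⟩
    refine (Finset.eq_of_subset_of_card_le ?_ ?_).symm
    · intro x hx
      exact Finset.mem_erase.mpr ⟨fun h => hiσ (h ▸ hx), hσF hx⟩
    · rw [Finset.card_erase_of_mem hiF, hF, hσd]; omega
  · intros; rfl

lemma phiL (hcomplex : IsComplex Δ) (hpure : ∀ F ∈ facetsF Δ, F.card = d + 1)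
    (y : Finset (Fin n) → K)
    (hy : ∀ σ ∈ Δ, σ.card = d → ∑ F ∈ (facetsF Δ).filter (fun F => σ ⊆ F), y F = 0)
    (q : MvPolynomial (Fin n) K) :
    ∑ F ∈ facetsF Δ, y F * coeff (eF F) ((∑ i, X i) * q) = 0 := by
  have step1 : ∀ F ∈ facetsF Δ,
      y F * coeff (eF F) ((∑ i, X i) * q) = ∑ i ∈ F, y F * coeff (eF (F.erase i)) q := by
    intro F hF
    have : coeff (eF F) ((∑ i, X i) * q) = ∑ i ∈ F, coeff (eF (F.erase i)) q := by
      rw [Finset.sum_mul, coeff_sum]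
      rw [← Finset.sum_subset (Finset.subset_univ F) (fun i _ hiF => ?_)]
      · refine Finset.sum_congr rfl fun i hi => ?_
        rw [coeff_X_mul', if_pos (by rw [eF_support]; exact hi), eF_sub_single hi]
      · rw [coeff_X_mul', if_neg (by rw [eF_support]; exact hiF)]
    rw [this, Finset.mul_sum]
  rw [Finset.sum_congr rfl step1]
  have step2 : ∀ F ∈ facetsF Δ,
      ∑ i ∈ F, y F * coeff (eF (F.erase i)) q
        = ∑ σ ∈ Finset.univ.filter (fun σ : Finset (Fin n) => σ ⊆ F ∧ σ.card = d),
            y F * coeff (eF σ) q := by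
    intro F hF
    exact erase_reindex (hpure F hF) (fun σ => y F * coeff (eF σ) q)
  rw [Finset.sum_congr rfl step2]
  have step3 : ∀ F ∈ facetsF Δ,
      ∑ σ ∈ Finset.univ.filter (fun σ : Finset (Fin n) => σ ⊆ F ∧ σ.card = d),
          y F * coeff (eF σ) q
        = ∑ σ : Finset (Fin n),
            if σ ⊆ F ∧ σ.card = d then y F * coeff (eF σ) q else 0 := by
    intro F _
    rw [Finset.sum_filter]
  rw [Finset.sum_congr rfl step3, Finset.sum_comm]
  refine Finset.sum_eq_zero fun σ _ => ?_
  by_cases hσd : σ.card = d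
  · have : ∀ F ∈ facetsF Δ,
        (if σ ⊆ F ∧ σ.card = d then y F * coeff (eF σ) q else 0)
          = (if σ ⊆ F then y F else 0) * coeff (eF σ) q := by
      intro F _
      by_cases h : σ ⊆ F
      · rw [if_pos ⟨h, hσd⟩, if_pos h]
      · rw [if_neg (fun hh => h hh.1), if_neg h, zero_mul]
    rw [Finset.sum_congr rfl this, ← Finset.sum_mul, ← Finset.sum_filter]
    by_cases hσΔ : σ ∈ Δ
    · rw [hy σ hσΔ hσd, zero_mul]
    · have : (facetsF Δ).filter (fun F => σ ⊆ F) = ∅ := by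
        rw [Finset.filter_eq_empty_iff]
        intro F hF hσF
        exact hσΔ (hcomplex.2 F (mem_facetsF.mp hF).1 σ hσF)
      rw [this, Finset.sum_empty, zero_mul]
  · refine Finset.sum_eq_zero fun F _ => ?_
    rw [if_neg (fun hh => hσd hh.2)]
end


section
variable {K : Type} [Field K] {n d : ℕ} {Δ : Finset (Finset (Fin n))}

lemma facetsF_eq (hdim : ∀ σ ∈ Δ, σ.card ≤ d + 1) (hpure : IsPure Δ d) :
    facetsF Δ = Δ.filter (fun F => F.card = d + 1) := by
  ext F
  rw [mem_facetsF, Finset.mem_filter]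
  constructor
  · intro h; exact ⟨h.1, hpure F h⟩
  · intro h; exact card_isFacet hdim h.1 h.2

lemma smul_mk (J : Ideal (MvPolynomial (Fin n) K)) (a : K) (x : MvPolynomial (Fin n) K) :
    a • Ideal.Quotient.mk J x = Ideal.Quotient.mk J (a • x) := by
  rw [← Ideal.Quotient.mkₐ_eq_mk K J]
  exact ((Ideal.Quotient.mkₐ K J).toLinearMap.map_smul a x).symm

lemma mk_monomial_linIndep (hcomplex : IsComplex Δ) (s : ℕ) :
    LinearIndependent K (fun σ : {σ : Finset (Fin n) // σ ∈ Δ.filter (fun τ => τ.card = s)} =>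
      Ideal.Quotient.mk (AIdeal K Δ 2) (monomial (eF σ.1) (1:K))) := by
  rw [linearIndependent_iff']
  intro t g hg σ₀ hσ₀
  have hmem : (∑ σ ∈ t, monomial (eF σ.1) (g σ) : MvPolynomial (Fin n) K) ∈ AIdeal K Δ 2 := by
    rw [← Ideal.Quotient.eq_zero_iff_mem, ← hg,
      map_sum (Ideal.Quotient.mk (AIdeal K Δ 2)) _ t]
    refine Finset.sum_congr rfl fun σ _ => ?_
    rw [show (monomial (eF σ.1) (g σ) : MvPolynomial (Fin n) K)
        = g σ • monomial (eF σ.1) 1 by rw [smul_monomial, smul_eq_mul, mul_one]]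
    rw [smul_mk]
  have hσ₀Δ : σ₀.1 ∈ Δ := (Finset.mem_filter.mp σ₀.2).1
  have := coeff_face_vanish hcomplex hmem hσ₀Δ
  rw [coeff_sum] at this
  rw [Finset.sum_eq_single σ₀ (fun σ _ hne => ?_) (fun h => absurd hσ₀ h)] at this
  · rwa [coeff_monomial, if_pos rfl] at this
  · rw [coeff_monomial, if_neg]
    intro h
    exact hne (Subtype.ext (eF_inj h))

lemma ridge_count (hcomplex : IsComplex Δ) (hdim : ∀ σ ∈ Δ, σ.card ≤ d + 1)
    (hpm : IsPseudomanifoldNB Δ d) (hd : 1 ≤ d) :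
    (Δ.filter (fun F => F.card = d + 1)).card ≤ (Δ.filter (fun σ => σ.card = d)).card := by
  have inner1 : ∀ F ∈ Δ.filter (fun F : Finset (Fin n) => F.card = d + 1),
      ∑ σ ∈ Δ.filter (fun σ => σ.card = d), (if σ ⊆ F then (1:ℕ) else 0) = d + 1 := by
    intro F hF
    rw [Finset.mem_filter] at hF
    have inner : ∀ σ : Finset (Fin n), σ ∈ Δ.filter (fun σ => σ.card = d) →
        (if σ ⊆ F then (1:ℕ) else 0) = if σ ⊆ F ∧ σ.card = d then 1 else 0 := by
      intro σ hσ
      rw [Finset.mem_filter] at hσ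
      by_cases h : σ ⊆ F
      · rw [if_pos h, if_pos ⟨h, hσ.2⟩]
      · rw [if_neg h, if_neg (fun hh => h hh.1)]
    rw [Finset.sum_congr rfl inner]
    have expand : ∑ σ ∈ Δ.filter (fun σ => σ.card = d), (if σ ⊆ F ∧ σ.card = d then (1:ℕ) else 0)
        = ∑ σ ∈ Finset.univ.filter (fun σ : Finset (Fin n) => σ ⊆ F ∧ σ.card = d), 1 := by
      rw [← Finset.sum_filter]
      congr 1
      ext σ
      simp only [Finset.mem_filter, Finset.mem_univ, true_and]
      constructor
      · rintro ⟨-, h⟩; exact h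
      · rintro ⟨h1, h2⟩; exact ⟨⟨hcomplex.2 F hF.1 σ h1, h2⟩, h1, h2⟩
    rw [expand, ← erase_reindex hF.2 (fun _ => (1:ℕ)), Finset.sum_const, smul_eq_mul, mul_one,
      hF.2]
  have key : ∑ F ∈ Δ.filter (fun F => F.card = d + 1),
      ∑ σ ∈ Δ.filter (fun σ => σ.card = d), (if σ ⊆ F then 1 else 0)
        = (d + 1) * (Δ.filter (fun F => F.card = d + 1)).card := by
    rw [Finset.sum_congr rfl inner1, Finset.sum_const, smul_eq_mul, mul_comm]
  have inner2 : ∀ σ ∈ Δ.filter (fun σ : Finset (Fin n) => σ.card = d),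
      ∑ F ∈ Δ.filter (fun F => F.card = d + 1), (if σ ⊆ F then (1:ℕ) else 0) = 2 := by
    intro σ hσ
    rw [Finset.mem_filter] at hσ
    rw [← Finset.sum_filter, ← facetsF_eq hdim hpm.1]
    have := hpm.2.2 σ hσ.1 hσ.2
    rw [Finset.sum_const, smul_eq_mul, mul_one, this]
  have key2 : ∑ σ ∈ Δ.filter (fun σ => σ.card = d),
      ∑ F ∈ Δ.filter (fun F => F.card = d + 1), (if σ ⊆ F then 1 else 0)
        = 2 * (Δ.filter (fun σ => σ.card = d)).card := by
    rw [Finset.sum_congr rfl inner2, Finset.sum_const, smul_eq_mul, mul_comm]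
  rw [Finset.sum_comm, key2] at key
  have h2 : 2 * (Δ.filter (fun F => F.card = d + 1)).card
      ≤ (d + 1) * (Δ.filter (fun F => F.card = d + 1)).card := by
    exact Nat.mul_le_mul_right _ (by omega)
  rw [← key] at h2
  omega
end


section main
variable {K : Type} [Field K] [CharZero K] {n d : ℕ} {Δ : Finset (Finset (Fin n))}

lemma mk_monomial_mem_comp (s : ℕ) {σ : Finset (Fin n)} (h : σ.card = s) :
    Ideal.Quotient.mk (AIdeal K Δ 2) (monomial (eF σ) 1) ∈ quotComponent K (AIdeal K Δ 2) s :=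
  ⟨monomial (eF σ) 1,
    (mem_homogeneousSubmodule _ _).mpr (isHomogeneous_monomial 1 (by rw [eF_degree, h])), rfl⟩

lemma facets_adj (hpm : IsPseudomanifoldNB Δ d) {σ F G : Finset (Fin n)}
    (hσd : σ.card = d) (hF : IsFacet Δ F) (hG : IsFacet Δ G) (hne : F ≠ G)
    (hσF : σ ⊆ F) (hσG : σ ⊆ G) : (F ∩ G).card = d := by
  have hd1 : F.card = d + 1 := hpm.1 F hF
  have h1 : d ≤ (F ∩ G).card := by
    rw [← hσd]
    exact Finset.card_le_card (Finset.subset_inter hσF hσG)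
  have h2 : (F ∩ G).card ≤ d + 1 := le_trans (Finset.card_le_card Finset.inter_subset_left) hd1.le
  rcases Nat.lt_or_ge (F ∩ G).card (d + 1) with h | h
  · omega
  · exfalso
    have heq : F ∩ G = F :=
      Finset.eq_of_subset_of_card_le Finset.inter_subset_left (by omega)
    exact hne (hF.2 G hG.1 (Finset.inter_eq_left.mp heq))

lemma filter_eq_pair (hpm : IsPseudomanifoldNB Δ d) {σ F G : Finset (Fin n)}
    (hσΔ : σ ∈ Δ) (hσd : σ.card = d) (hF : IsFacet Δ F) (hG : IsFacet Δ G) (hne : F ≠ G)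
    (hσF : σ ⊆ F) (hσG : σ ⊆ G) :
    ((facetsF Δ).filter fun H => σ ⊆ H) = {F, G} := by
  have hsub : ({F, G} : Finset (Finset (Fin n))) ⊆ (facetsF Δ).filter fun H => σ ⊆ H := by
    intro H hH
    rw [Finset.mem_insert, Finset.mem_singleton] at hH
    rcases hH with rfl | rfl
    · exact Finset.mem_filter.mpr ⟨mem_facetsF.mpr hF, hσF⟩
    · exact Finset.mem_filter.mpr ⟨mem_facetsF.mpr hG, hσG⟩
  exact (Finset.eq_of_subset_of_card_le hsub
    (by rw [hpm.2.2 σ hσΔ hσd, Finset.card_pair hne])).symm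

/-- the two facets over a ridge -/
lemma ridge_two_facets (hpm : IsPseudomanifoldNB Δ d) {σ : Finset (Fin n)}
    (hσΔ : σ ∈ Δ) (hσd : σ.card = d) :
    ∃ F G : Finset (Fin n), F ≠ G ∧ IsFacet Δ F ∧ IsFacet Δ G ∧ σ ⊆ F ∧ σ ⊆ G ∧
      ((facetsF Δ).filter fun H => σ ⊆ H) = {F, G} := by
  obtain ⟨F, G, hne, hFG⟩ := Finset.card_eq_two.mp (hpm.2.2 σ hσΔ hσd)
  have hFmem : F ∈ (facetsF Δ).filter fun H => σ ⊆ H := by rw [hFG]; simp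
  have hGmem : G ∈ (facetsF Δ).filter fun H => σ ⊆ H := by rw [hFG]; simp
  rw [Finset.mem_filter] at hFmem hGmem
  exact ⟨F, G, hne, mem_facetsF.mp hFmem.1, mem_facetsF.mp hGmem.1, hFmem.2, hGmem.2, hFG⟩

lemma fin2_cases (a : Fin 2) : a = 0 ∨ a = 1 := by omega

/-- Part 1, direction ⇐ : colorable implies not surjective -/
lemma colorable_not_surj (hcomplex : IsComplex Δ) (hdim : HasDim Δ d)
    (hpm : IsPseudomanifoldNB Δ d)
    (hcol : (facetRidgeGraph Δ d).Colorable 2) :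
    ¬ (∀ y ∈ quotComponent K (AIdeal K Δ 2) (d + 1),
          ∃ x ∈ quotComponent K (AIdeal K Δ 2) d,
            Ideal.Quotient.mk (AIdeal K Δ 2) (∑ i, X i) * x = y) := by
  obtain ⟨C⟩ := hcol
  set y : Finset (Fin n) → K := fun F =>
    if h : IsFacet Δ F then (if C ⟨F, h⟩ = 0 then 1 else -1) else 0 with hy_def
  have hy : ∀ σ ∈ Δ, σ.card = d → ∑ F ∈ (facetsF Δ).filter (fun F => σ ⊆ F), y F = 0 := by
    intro σ hσΔ hσd
    obtain ⟨F, G, hne, hF, hG, hσF, hσG, hFG⟩ := ridge_two_facets hpm hσΔ hσd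
    rw [hFG, Finset.sum_pair hne]
    have hadj : (facetRidgeGraph Δ d).Adj ⟨F, hF⟩ ⟨G, hG⟩ :=
      ⟨fun h => hne (congrArg Subtype.val h), facets_adj hpm hσd hF hG hne hσF hσG⟩
    have hCne := C.valid hadj
    rw [hy_def]
    simp only [dif_pos hF, dif_pos hG]
    rcases fin2_cases (C ⟨F, hF⟩) with h1 | h1 <;> rcases fin2_cases (C ⟨G, hG⟩) with h2 | h2
    · exact absurd (h1.trans h2.symm) hCne
    · rw [if_pos h1, if_neg (by rw [h2]; decide)]; ring
    · rw [if_neg (by rw [h1]; decide), if_pos h2]; ring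
    · exact absurd (h1.trans h2.symm) hCne
  intro hS
  obtain ⟨F₀, hF₀Δ, hF₀c⟩ := hdim.2
  have hF₀ : IsFacet Δ F₀ := card_isFacet hdim.1 hF₀Δ hF₀c
  obtain ⟨x, hx, hLx⟩ := hS (Ideal.Quotient.mk (AIdeal K Δ 2) (monomial (eF F₀) 1))
    (mk_monomial_mem_comp (d + 1) hF₀c)
  obtain ⟨q, hq, rfl⟩ := hx
  have hmul : Ideal.Quotient.mk (AIdeal K Δ 2) (∑ i, X i) *
      (Ideal.Quotient.mkₐ K (AIdeal K Δ 2)).toLinearMap q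
        = Ideal.Quotient.mk (AIdeal K Δ 2) ((∑ i, X i) * q) := by
    rw [show (Ideal.Quotient.mkₐ K (AIdeal K Δ 2)).toLinearMap q
      = Ideal.Quotient.mk (AIdeal K Δ 2) q from rfl, ← map_mul]
  rw [hmul] at hLx
  have hmem : ((∑ i, X i) * q - monomial (eF F₀) 1 : MvPolynomial (Fin n) K) ∈ AIdeal K Δ 2 := by
    rw [← Ideal.Quotient.eq_zero_iff_mem, map_sub, hLx, sub_self]
  have hvan : ∑ F ∈ facetsF Δ, y F * coeff (eF F) ((∑ i, X i) * q - monomial (eF F₀) 1) = 0 := by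
    refine Finset.sum_eq_zero fun F hF => ?_
    rw [coeff_face_vanish hcomplex hmem (mem_facetsF.mp hF).1, mul_zero]
  have hpure : ∀ F ∈ facetsF Δ, F.card = d + 1 := fun F hF => hpm.1 F (mem_facetsF.mp hF)
  have hsplit : ∀ F ∈ facetsF Δ,
      y F * coeff (eF F) ((∑ i, X i) * q - monomial (eF F₀) 1)
        = y F * coeff (eF F) ((∑ i, X i) * q) - y F * coeff (eF F) (monomial (eF F₀) 1) := by
    intro F _
    rw [coeff_sub, mul_sub]
  rw [Finset.sum_congr rfl hsplit, Finset.sum_sub_distrib, phiL hcomplex hpure y hy q,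
    zero_sub, neg_eq_zero] at hvan
  have hsingle : ∑ F ∈ facetsF Δ, y F * coeff (eF F) (monomial (eF F₀) 1 : MvPolynomial (Fin n) K)
      = y F₀ := by
    rw [Finset.sum_eq_single F₀ (fun F _ hne => ?_) (fun h => absurd (mem_facetsF.mpr hF₀) h)]
    · rw [coeff_monomial, if_pos rfl, mul_one]
    · rw [coeff_monomial, if_neg (fun h => hne (eF_inj h).symm), mul_zero]
  rw [hsingle] at hvan
  rw [hy_def] at hvan
  simp only [dif_pos hF₀] at hvan
  split_ifs at hvan
  · exact one_ne_zero hvan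
  · exact one_ne_zero (neg_eq_zero.mp hvan)

/-- abstract bipartition construction -/
lemma abstract_coloring {M : Type} [AddCommGroup M] [Module K M] (W : Submodule K M)
    (v : Finset (Fin n) → M) (hpm : IsPseudomanifoldNB Δ d)
    (hadj : ∀ F G, IsFacet Δ F → IsFacet Δ G → F ≠ G → (F ∩ G).card = d → v F + v G ∈ W)
    {F₀ : Finset (Fin n)} (hF₀ : IsFacet Δ F₀) (hv₀ : v F₀ ∉ W) :
    (facetRidgeGraph Δ d).Colorable 2 := by
  have notboth : ∀ z : M, z - v F₀ ∈ W → z + v F₀ ∈ W → False := by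
    intro z h1 h2
    have h3 : (2 : K) • v F₀ ∈ W := by
      have := W.sub_mem h2 h1
      rw [two_smul]
      convert this using 1
      abel
    have h4 : v F₀ ∈ W := by
      have := W.smul_mem ((2 : K)⁻¹) h3
      rwa [smul_smul, inv_mul_cancel₀ (two_ne_zero), one_smul] at this
    exact hv₀ h4
  have dicho : ∀ F : Finset (Fin n), IsFacet Δ F →
      (v F - v F₀ ∈ W) ∨ (v F + v F₀ ∈ W) := by
    intro F hF
    have hpath := hpm.2.1 F₀ F hF₀ hF
    clear hF
    induction hpath with
    | refl => left; rw [sub_self]; exact W.zero_mem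
    | @tail B C hab hbc ih =>
      obtain ⟨hB, hC, hcard⟩ := hbc
      have hne : B ≠ C := by
        intro h
        subst h
        rw [Finset.inter_self] at hcard
        have := hpm.1 B hB
        omega
      have hBC := hadj B C hB hC hne hcard
      rcases ih with h | h
      · right
        have := W.sub_mem hBC h
        convert this using 1
        abel
      · left
        have := W.sub_mem hBC h
        convert this using 1
        abel
  refine ⟨SimpleGraph.Coloring.mk
    (fun F => if v F.1 - v F₀ ∈ W then 0 else 1) ?_⟩
  rintro ⟨F, hF⟩ ⟨G, hG⟩ ⟨hne, hcard⟩ heq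
  have hne' : F ≠ G := fun h => hne (Subtype.ext h)
  have hFG := hadj F G hF hG hne' hcard
  simp only at heq
  by_cases h1 : v F - v F₀ ∈ W <;> by_cases h2 : v G - v F₀ ∈ W
  · apply notboth (v F₀)
    · rw [sub_self]; exact W.zero_mem
    · have := W.sub_mem (W.sub_mem hFG h1) h2
      convert this using 1
      abel
  · rw [if_pos h1, if_neg h2] at heq; exact absurd heq (by decide)
  · rw [if_neg h1, if_pos h2] at heq; exact absurd heq (by decide)
  · rcases dicho F hF with h1' | h1'
    · exact h1 h1'
    rcases dicho G hG with h2' | h2'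
    · exact h2 h2'
    apply notboth (v F₀)
    · rw [sub_self]; exact W.zero_mem
    · have := W.sub_mem (W.add_mem h1' h2') hFG
      convert this using 1
      abel

/-- Part 1, direction ⇒ : not surjective implies colorable -/
lemma not_surj_colorable (hcomplex : IsComplex Δ) (hdim : HasDim Δ d)
    (hpm : IsPseudomanifoldNB Δ d)
    (hns : ¬ (∀ y ∈ quotComponent K (AIdeal K Δ 2) (d + 1),
          ∃ x ∈ quotComponent K (AIdeal K Δ 2) d,
            Ideal.Quotient.mk (AIdeal K Δ 2) (∑ i, X i) * x = y)) :
    (facetRidgeGraph Δ d).Colorable 2 := by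
  set W : Submodule K (MvPolynomial (Fin n) K ⧸ AIdeal K Δ 2) :=
    Submodule.map (LinearMap.mulLeft K (Ideal.Quotient.mk (AIdeal K Δ 2) (∑ i, X i)))
      (quotComponent K (AIdeal K Δ 2) d) with hW
  have hWmem : ∀ z, z ∈ W ↔ ∃ x ∈ quotComponent K (AIdeal K Δ 2) d,
      Ideal.Quotient.mk (AIdeal K Δ 2) (∑ i, X i) * x = z := by
    intro z
    rw [hW, Submodule.mem_map]
    constructor
    · rintro ⟨x, hx, rfl⟩; exact ⟨x, hx, rfl⟩
    · rintro ⟨x, hx, h⟩; exact ⟨x, hx, h⟩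
  have adjW : ∀ F G : Finset (Fin n), IsFacet Δ F → IsFacet Δ G → F ≠ G → (F ∩ G).card = d →
      Ideal.Quotient.mk (AIdeal K Δ 2) (monomial (eF F) 1)
        + Ideal.Quotient.mk (AIdeal K Δ 2) (monomial (eF G) 1) ∈ W := by
    intro F G hF hG hne hcard
    have hσΔ : F ∩ G ∈ Δ := hcomplex.2 F hF.1 _ Finset.inter_subset_left
    have hFG := filter_eq_pair hpm hσΔ hcard hF hG hne
      Finset.inter_subset_left Finset.inter_subset_right
    rw [← keyRel hcomplex hdim hpm hσΔ hcard hne hFG, hWmem]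
    exact ⟨Ideal.Quotient.mk (AIdeal K Δ 2) (monomial (eF (F ∩ G)) 1),
      mk_monomial_mem_comp d hcard, by rw [← map_mul]⟩
  have hexists : ∃ F₀, IsFacet Δ F₀ ∧
      Ideal.Quotient.mk (AIdeal K Δ 2) (monomial (eF F₀) 1) ∉ W := by
    by_contra hall
    push_neg at hall
    apply hns
    intro z hz
    rw [← hWmem]
    have himg : ((fun σ => Ideal.Quotient.mk (AIdeal K Δ 2) (monomial (eF σ) (1:K))) ''
        {σ | σ ∈ Δ ∧ σ.card = d + 1}) ⊆ (W : Set (MvPolynomial (Fin n) K ⧸ AIdeal K Δ 2)) := by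
      rintro _ ⟨σ, ⟨h1, h2⟩, rfl⟩
      exact hall σ (card_isFacet hdim.1 h1 h2)
    exact (le_trans (comp_le_span (K := K) hcomplex (d + 1)) (Submodule.span_le.mpr himg)) hz
  obtain ⟨F₀, hF₀, hv₀⟩ := hexists
  exact abstract_coloring W (fun F => Ideal.Quotient.mk (AIdeal K Δ 2) (monomial (eF F) 1))
    hpm adjW hF₀ hv₀
end main

section main2
variable {K : Type} [Field K] [CharZero K] {n d : ℕ} {Δ : Finset (Finset (Fin n))}

/-- colorable (hence not surjective) implies not injective -/
lemma not_inj (hcomplex : IsComplex Δ) (hdim : HasDim Δ d) (hd : 1 ≤ d)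
    (hpm : IsPseudomanifoldNB Δ d)
    (hns : ¬ (∀ y ∈ quotComponent K (AIdeal K Δ 2) (d + 1),
          ∃ x ∈ quotComponent K (AIdeal K Δ 2) d,
            Ideal.Quotient.mk (AIdeal K Δ 2) (∑ i, X i) * x = y)) :
    ¬ (∀ x ∈ quotComponent K (AIdeal K Δ 2) d,
          Ideal.Quotient.mk (AIdeal K Δ 2) (∑ i, X i) * x = 0 → x = 0) := by
  intro hI
  -- spanning sets
  have hspan : ∀ s : ℕ, quotComponent K (AIdeal K Δ 2) s ≤
      Submodule.span K (((Δ.filter (fun τ => τ.card = s)).image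
        (fun σ => Ideal.Quotient.mk (AIdeal K Δ 2) (monomial (eF σ) (1:K)))) :
          Set (MvPolynomial (Fin n) K ⧸ AIdeal K Δ 2)) := by
    intro s
    refine le_trans (comp_le_span (K := K) hcomplex s) (Submodule.span_mono ?_)
    rintro _ ⟨σ, ⟨h1, h2⟩, rfl⟩
    exact Finset.mem_coe.mpr (Finset.mem_image.mpr ⟨σ, Finset.mem_filter.mpr ⟨h1, h2⟩, rfl⟩)
  haveI hfd : ∀ s : ℕ, FiniteDimensional K (quotComponent K (AIdeal K Δ 2) s) := fun s =>
    Submodule.finiteDimensional_of_le (hspan s)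
  haveI := hfd d
  haveI := hfd (d + 1)
  -- upper bound for the target
  have hub : Module.finrank K (quotComponent K (AIdeal K Δ 2) (d + 1))
      ≤ (Δ.filter (fun F => F.card = d + 1)).card := by
    refine le_trans (Submodule.finrank_mono (hspan (d + 1))) (le_trans
      (finrank_span_finset_le_card _) Finset.card_image_le)
  -- lower bound for the source
  have hlb : (Δ.filter (fun σ => σ.card = d)).card
      ≤ Module.finrank K (quotComponent K (AIdeal K Δ 2) d) := by
    set v : {σ : Finset (Fin n) // σ ∈ Δ.filter (fun τ => τ.card = d)} →
        quotComponent K (AIdeal K Δ 2) d := fun σ =>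
      ⟨Ideal.Quotient.mk (AIdeal K Δ 2) (monomial (eF σ.1) 1),
        mk_monomial_mem_comp d (Finset.mem_filter.mp σ.2).2⟩ with hv
    have hli : LinearIndependent K v :=
      LinearIndependent.of_comp (quotComponent K (AIdeal K Δ 2) d).subtype
        (mk_monomial_linIndep hcomplex d)
    have := hli.fintype_card_le_finrank
    rwa [Fintype.card_coe] at this
  -- the multiplication map
  have hmapmem : ∀ x ∈ quotComponent K (AIdeal K Δ 2) d,
      (LinearMap.mulLeft K (Ideal.Quotient.mk (AIdeal K Δ 2) (∑ i, X i))) x ∈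
        quotComponent K (AIdeal K Δ 2) (d + 1) := by
    rintro _ ⟨q, hq, rfl⟩
    have hq' : q.IsHomogeneous d := hq
    have hL : ((∑ i, X i : MvPolynomial (Fin n) K)).IsHomogeneous 1 :=
      MvPolynomial.IsHomogeneous.sum _ _ _ (fun i _ => isHomogeneous_X K i)
    refine ⟨(∑ i, X i) * q, ?_, ?_⟩
    · show (∑ i, X i) * q ∈ homogeneousSubmodule (Fin n) K (d + 1)
      rw [mem_homogeneousSubmodule]
      simpa [Nat.add_comm] using hL.mul hq'
    · show Ideal.Quotient.mk (AIdeal K Δ 2) ((∑ i, X i) * q)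
        = Ideal.Quotient.mk (AIdeal K Δ 2) (∑ i, X i) * Ideal.Quotient.mk (AIdeal K Δ 2) q
      rw [map_mul]
  set T := (LinearMap.mulLeft K (Ideal.Quotient.mk (AIdeal K Δ 2) (∑ i, X i))).restrict hmapmem
    with hT
  have hTval : ∀ z, (T z : MvPolynomial (Fin n) K ⧸ AIdeal K Δ 2)
      = Ideal.Quotient.mk (AIdeal K Δ 2) (∑ i, X i) * (z : MvPolynomial (Fin n) K ⧸ AIdeal K Δ 2) :=
    fun z => rfl
  have hinj : Function.Injective T := by
    rw [← LinearMap.ker_eq_bot]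
    ext z
    simp only [LinearMap.mem_ker, Submodule.mem_bot]
    constructor
    · intro hz
      have h1 : (T z : MvPolynomial (Fin n) K ⧸ AIdeal K Δ 2) = 0 := by rw [hz]; rfl
      rw [hTval] at h1
      exact Subtype.ext (hI z.1 z.2 h1)
    · intro hz
      apply Subtype.ext
      rw [hTval, hz]
      show Ideal.Quotient.mk (AIdeal K Δ 2) (∑ i, X i) * (0 : MvPolynomial (Fin n) K ⧸ AIdeal K Δ 2) = 0
      rw [mul_zero]
  have hrange : LinearMap.range T ≠ ⊤ := by
    intro htop
    apply hns
    intro y hy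
    obtain ⟨x, hx⟩ := LinearMap.range_eq_top.mp htop ⟨y, hy⟩
    refine ⟨x.1, x.2, ?_⟩
    have := congrArg Subtype.val hx
    rwa [hTval] at this
  have h1 : Module.finrank K (LinearMap.range T)
      = Module.finrank K (quotComponent K (AIdeal K Δ 2) d) :=
    LinearMap.finrank_range_of_inj hinj
  have h2 : Module.finrank K (LinearMap.range T)
      < Module.finrank K (quotComponent K (AIdeal K Δ 2) (d + 1)) :=
    Submodule.finrank_lt hrange
  have hcount := ridge_count hcomplex hdim.1 hpm hd
  omega
end main2

/-- **Dao–Nair: failure of surjectivity detects bipartiteness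
(Theorem `t:daonair`).**
Let `Δ` be a `d`-dimensional pseudomanifold without boundary (`d ≥ 1`),
`A = A_Δ(2)` and `L = x_1 + ⋯ + x_n`.  Then `×L : A_d → A_{d+1}` is not
surjective iff the facet–ridge graph `G(Δ)` is bipartite; in particular it
fails to have full rank iff `G(Δ)` is bipartite. -/
theorem daoNair_bipartite (K : Type) [Field K] [CharZero K]
    {n d : ℕ} (Δ : Finset (Finset (Fin n)))
    (hcomplex : IsComplex Δ) (hdim : HasDim Δ d) (hd : 1 ≤ d)
    (hpm : IsPseudomanifoldNB Δ d) :
    (¬ (∀ y ∈ quotComponent K (AIdeal K Δ 2) (d + 1),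
          ∃ x ∈ quotComponent K (AIdeal K Δ 2) d,
            Ideal.Quotient.mk (AIdeal K Δ 2) (∑ i, X i) * x = y) ↔
        (facetRidgeGraph Δ d).Colorable 2) ∧
    (¬ ((∀ x ∈ quotComponent K (AIdeal K Δ 2) d,
            Ideal.Quotient.mk (AIdeal K Δ 2) (∑ i, X i) * x = 0 → x = 0) ∨
        (∀ y ∈ quotComponent K (AIdeal K Δ 2) (d + 1),
            ∃ x ∈ quotComponent K (AIdeal K Δ 2) d,
              Ideal.Quotient.mk (AIdeal K Δ 2) (∑ i, X i) * x = y)) ↔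
        (facetRidgeGraph Δ d).Colorable 2) := by
  constructor
  · constructor
    · exact fun hns => not_surj_colorable hcomplex hdim hpm hns
    · exact fun hcol => colorable_not_surj hcomplex hdim hpm hcol
  · constructor
    · intro h
      rw [not_or] at h
      exact not_surj_colorable hcomplex hdim hpm h.2
    · intro hcol h
      have hns := colorable_not_surj (K := K) hcomplex hdim hpm hcol
      rcases h with h | h
      · exact not_inj hcomplex hdim hd hpm hns h
      · exact hns h
end
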